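/- arXiv:0710.0330 — 9 statements merged into one kernel-verified Lean document; each statement's English description precedes it below -/
import Mathlib

section
/- Let A be a commutative ring and L a unit of A. For all integers p ∈ ℤ, q ≥ 0 and r ≥ 1 with q ≤ r, the power series T^q · (T^r − L^p)^{−1} belongs to the A-subalgebra 𝓡 of A[[T]] generated by the elements T^b · (T^b − L^a)^{−1}, a ∈ ℤ, b ≥ 1. -/
/-!
Put `g = (T - 1)⁻¹` and `h = (T^r - L^p)⁻¹`; both lie in 𝓡. Since `T g = 1 + g`, we have
`(T^r - L^p) g^r = P(g)` for the polynomial `P(u) = (1 + u)^r - L^p u^r`, whose constant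
term is `1`. Hence `P` is coprime to `u^r`, and a Bézout identity `S u^r + U P = 1`, evaluated
at `g` and multiplied by `T^q h`, gives `T^q h = (1 + g)^q g^(r-q) (S(g) h + U(g))`,
a polynomial in `g` and `h`.
-/

open PowerSeries

/-- The `A`-subalgebra 𝓡 of `A⟦T⟧` generated by the elements `T^b * (T^b - L^a)⁻¹`
for `a ∈ ℤ`, `b ≥ 1` (the inverse being taken in `A⟦T⟧`, where `T^b - L^a` is a unit
since its constant coefficient `-L^a` is a unit of `A`). -/
noncomputable def RatAlg (A : Type*) [CommRing A] (L : Aˣ) : Subalgebra A (PowerSeries A) :=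
  Algebra.adjoin A
    {x : PowerSeries A | ∃ (a : ℤ) (b : ℕ), 1 ≤ b ∧
      x = (PowerSeries.X : PowerSeries A) ^ b *
        Ring.inverse ((PowerSeries.X : PowerSeries A) ^ b -
          PowerSeries.C (R := A) ((L ^ a : Aˣ) : A))}

namespace Polynomial

variable {A : Type*} [CommRing A]

theorem isCoprime_X_pow_of_coeff_zero_eq_one {P : A[X]} (hP : P.coeff 0 = 1) (r : ℕ) :
    IsCoprime (X ^ r) P := by
  obtain ⟨Q, hQ⟩ := X_dvd_sub_C (p := P)
  rw [hP, map_one, sub_eq_iff_eq_add'] at hQ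
  rw [hQ]
  exact (isCoprime_one_right.add_mul_left_right Q).pow_left

theorem isCoprime_X_pow_one_add_X_pow_sub_C_mul_X_pow (c : A) {r : ℕ} (hr : r ≠ 0) :
    IsCoprime (X ^ r) ((1 + X) ^ r - C c * X ^ r) :=
  isCoprime_X_pow_of_coeff_zero_eq_one (by simp [coeff_zero_eq_eval_zero, hr]) r

end Polynomial

theorem pow_mul_mem_adjoin_of_mul_eq_one {A B : Type*} [CommRing A] [CommRing B] [Algebra A B]
    {x g h : B} {c : A} {q r : ℕ} (hr : r ≠ 0) (hqr : q ≤ r) (hg : (x - 1) * g = 1)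
    (hh : (x ^ r - algebraMap A B c) * h = 1) :
    x ^ q * h ∈ Algebra.adjoin A {g, h} := by
  obtain ⟨k, rfl⟩ := Nat.exists_eq_add_of_le hqr
  have hxg : x * g = 1 + g := by linear_combination hg
  obtain ⟨S, U, hSU⟩ := Polynomial.isCoprime_X_pow_one_add_X_pow_sub_C_mul_X_pow c hr
  replace hSU := congrArg (Polynomial.aeval g) hSU
  simp only [map_add, map_sub, map_mul, map_pow, map_one, Polynomial.aeval_X,
    Polynomial.aeval_C, ← hxg] at hSU
  have key : x ^ q * h = Polynomial.aeval g ((1 + Polynomial.X) ^ q * Polynomial.X ^ k * U)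
      + Polynomial.aeval g ((1 + Polynomial.X) ^ q * Polynomial.X ^ k * S) * h := by
    simp only [map_add, map_mul, map_pow, Polynomial.aeval_X, map_one, ← hxg]
    linear_combination (-x ^ q * h) * hSU + (x ^ q * g ^ (q + k) * Polynomial.aeval g U) * hh
  have aeval_mem (F : Polynomial A) : Polynomial.aeval g F ∈ Algebra.adjoin A {g, h} :=
    Algebra.adjoin_mono (Set.singleton_subset_iff.mpr (Set.mem_insert g {h}))
      (Polynomial.aeval_mem_adjoin_singleton A g)
  rw [key]
  exact add_mem (aeval_mem _) (mul_mem (aeval_mem _) (Algebra.subset_adjoin (by simp)))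

theorem PowerSeries.isUnit_X_pow_sub_C {A : Type*} [CommRing A] {c : A} (hc : IsUnit c)
    {b : ℕ} (hb : b ≠ 0) : IsUnit ((X : A⟦X⟧) ^ b - C c) := by
  rw [isUnit_iff_constantCoeff]
  simpa [hb] using hc.neg

theorem inverse_X_pow_sub_C_mem_ratAlg {A : Type*} [CommRing A] (L : Aˣ) (a : ℤ) {b : ℕ}
    (hb : 1 ≤ b) :
    Ring.inverse ((X : A⟦X⟧) ^ b - C ((L ^ a : Aˣ) : A)) ∈ RatAlg A L := by
  set h := Ring.inverse ((X : A⟦X⟧) ^ b - C ((L ^ a : Aˣ) : A))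
  have hh : ((X : A⟦X⟧) ^ b - C ((L ^ a : Aˣ) : A)) * h = 1 :=
    Ring.mul_inverse_cancel _ (isUnit_X_pow_sub_C (L ^ a).isUnit (by omega))
  have hL : C ((L ^ a : Aˣ) : A) * C (((L ^ a)⁻¹ : Aˣ) : A) = 1 := by
    rw [← map_mul, Units.mul_inv, map_one]
  have h_eq : h = C (((L ^ a)⁻¹ : Aˣ) : A) * (X ^ b * h - 1) := by
    linear_combination (-h) * hL - C (((L ^ a)⁻¹ : Aˣ) : A) * hh
  rw [h_eq]
  exact mul_mem (Subalgebra.algebraMap_mem _ _)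
    (sub_mem (Algebra.subset_adjoin ⟨a, b, hb, rfl⟩) (one_mem _))

/-- for `p ∈ ℤ`, `0 ≤ q ≤ r`, `r ≥ 1`, the power series
`T^q * (T^r - L^p)⁻¹` belongs to 𝓡. -/
theorem stmt3 {A : Type*} [CommRing A] (L : Aˣ) (p : ℤ) (q r : ℕ)
    (hr : 1 ≤ r) (hqr : q ≤ r) :
    (PowerSeries.X : PowerSeries A) ^ q *
      Ring.inverse ((PowerSeries.X : PowerSeries A) ^ r -
        PowerSeries.C (R := A) ((L ^ p : Aˣ) : A)) ∈ RatAlg A L := by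
  set g := Ring.inverse ((X : A⟦X⟧) ^ 1 - C ((L ^ (0 : ℤ) : Aˣ) : A))
  set h := Ring.inverse ((X : A⟦X⟧) ^ r - C ((L ^ p : Aˣ) : A))
  have hg : (X - 1) * g = 1 := by
    simpa [g] using
      Ring.mul_inverse_cancel _ (isUnit_X_pow_sub_C (L ^ (0 : ℤ)).isUnit one_ne_zero)
  have hh : (X ^ r - algebraMap A A⟦X⟧ ((L ^ p : Aˣ) : A)) * h = 1 :=
    Ring.mul_inverse_cancel _ (isUnit_X_pow_sub_C (L ^ p).isUnit (by omega))
  refine Algebra.adjoin_le ?_ (pow_mul_mem_adjoin_of_mul_eq_one (by omega) hqr hg hh)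
  rw [Set.insert_subset_iff, Set.singleton_subset_iff]
  exact ⟨inverse_X_pow_sub_C_mem_ratAlg L 0 le_rfl, inverse_X_pow_sub_C_mem_ratAlg L p hr⟩
end

section
/- Let A be a commutative ring and let P₁, Q₁, P₂, Q₂ ∈ A[T] be polynomials such that Q₁ and Q₂ are monic, deg P₁ ≤ deg Q₁, deg P₂ ≤ deg Q₂, and P₁·Q₂ = P₂·Q₁. Then the coefficient of T^{deg Q₁} in P₁ equals the coefficient of T^{deg Q₂} in P₂. -/
open Polynomial

theorem Polynomial.Monic.coeff_mul_add_natDegree {R : Type*} [Semiring R] {P Q : R[X]}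
    (hQ : Q.Monic) {n : ℕ} (hP : P.natDegree ≤ n) :
    (P * Q).coeff (n + Q.natDegree) = P.coeff n := by
  rw [coeff_mul_add_eq_of_natDegree_le hP le_rfl, hQ.coeff_natDegree, mul_one]

/-- well-definedness of the limit `T → ∞`: if `P₁/Q₁ = P₂/Q₂` with `Qᵢ`
monic and `deg Pᵢ ≤ deg Qᵢ`, then the coefficient of `T^{deg Q₁}` in `P₁` equals the
coefficient of `T^{deg Q₂}` in `P₂`. -/
theorem stmt5 {A : Type*} [CommRing A] (P₁ Q₁ P₂ Q₂ : Polynomial A)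
    (hQ₁ : Q₁.Monic) (hQ₂ : Q₂.Monic)
    (h₁ : P₁.degree ≤ Q₁.degree) (h₂ : P₂.degree ≤ Q₂.degree)
    (h : P₁ * Q₂ = P₂ * Q₁) :
    P₁.coeff Q₁.natDegree = P₂.coeff Q₂.natDegree := by
  calc P₁.coeff Q₁.natDegree
      = (P₁ * Q₂).coeff (Q₁.natDegree + Q₂.natDegree) :=
        (hQ₂.coeff_mul_add_natDegree (natDegree_le_natDegree h₁)).symm
    _ = (P₂ * Q₁).coeff (Q₂.natDegree + Q₁.natDegree) := by rw [h, add_comm]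
    _ = P₂.coeff Q₂.natDegree := hQ₁.coeff_mul_add_natDegree (natDegree_le_natDegree h₂)
end

section
/- Let A be a commutative ring, L a unit of A, n ≥ 1 and d ≥ 1 integers, a : Fin n → ℤ and b : Fin n → ℕ with b(i) ≥ 1 for all i. For each i set e(i) = lcm(b(i), d)/b(i), and let S be the (finite) set of tuples u : Fin n → ℕ with 1 ≤ u(i) ≤ e(i) for all i and d ∣ Σᵢ u(i)·b(i). Then in A[[T]]: ( ∏ᵢ T^{b(i)} · (T^{b(i)} − L^{a(i)})^{−1} )[d] = ( Σ_{u ∈ S} L^{−Σᵢ a(i)u(i)} · T^{Σᵢ u(i)b(i)} ) · ∏ᵢ L^{a(i)e(i)} · (T^{b(i)e(i)} − L^{a(i)e(i)})^{−1}, where [d] denotes the truncation keeping only coefficients in degrees divisible by d. -/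
/-! Since `X^{be} - c^e = (X^b - c) · ∑_{k<e} X^{bk} c^{e-1-k}`, each factor rewrites as
`X^b (X^b - c)⁻¹ = (∑_{u=1}^{e} c^{-u} X^{bu}) · c^e (X^{be} - c^e)⁻¹`.
With `bᵢeᵢ = lcm(bᵢ, d)`, the second factors lie in the subring of series supported in degrees
divisible by `d`, over which `x ↦ x[d]` is linear; so the truncation only acts on the finite sum
of monomials obtained by multiplying out the first factors, and keeps those of degree
divisible by `d`. -/

open PowerSeries

/-- The truncation `x ↦ x[d]` keeping only the coefficients in degrees divisible by `d`. -/
noncomputable def truncDiv (A : Type*) [CommRing A] (d : ℕ) (x : PowerSeries A) :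
    PowerSeries A :=
  PowerSeries.mk fun i => if d ∣ i then PowerSeries.coeff i x else 0

section TruncDiv

variable {A : Type*} [CommRing A] (d : ℕ)

theorem coeff_truncDiv (x : A⟦X⟧) (j : ℕ) :
    coeff j (truncDiv A d x) = if d ∣ j then coeff j x else 0 :=
  coeff_mk _ _

theorem truncDiv_add (x y : A⟦X⟧) : truncDiv A d (x + y) = truncDiv A d x + truncDiv A d y := by
  ext j
  simp only [coeff_truncDiv, map_add]
  split_ifs <;> simp

theorem truncDiv_neg (x : A⟦X⟧) : truncDiv A d (-x) = -truncDiv A d x := by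
  ext j
  simp only [coeff_truncDiv, map_neg]
  split_ifs <;> simp

theorem truncDiv_sum {ι : Type*} (s : Finset ι) (f : ι → A⟦X⟧) :
    truncDiv A d (∑ i ∈ s, f i) = ∑ i ∈ s, truncDiv A d (f i) :=
  map_sum (AddMonoidHom.mk' (truncDiv A d) (truncDiv_add d)) f s

theorem truncDiv_monomial (m : ℕ) (α : A) :
    truncDiv A d (monomial m α) = if d ∣ m then monomial m α else 0 := by
  ext j
  rw [coeff_truncDiv, apply_ite (coeff j), coeff_monomial, map_zero]
  by_cases hjm : j = m
  · subst hjm; split_ifs <;> rfl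
  · simp [hjm]

theorem truncDiv_one : truncDiv A d 1 = 1 := by
  simpa using truncDiv_monomial d 0 (1 : A)

theorem truncDiv_mul_of_truncDiv_eq {x y : A⟦X⟧} (hy : truncDiv A d y = y) :
    truncDiv A d (x * y) = truncDiv A d x * y := by
  have hy_coeff (q : ℕ) : coeff q y = if d ∣ q then coeff q y else 0 := by
    rw [← coeff_truncDiv, hy]
  have hterm (p q : ℕ) : coeff p (truncDiv A d x) * coeff q y =
      if d ∣ p + q then coeff p x * coeff q y else 0 := by
    rw [coeff_truncDiv, hy_coeff q]
    by_cases hq : d ∣ q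
    · simp [hq, Nat.dvd_add_left hq]
    · simp [hq]
  ext j
  rw [coeff_truncDiv, coeff_mul, coeff_mul, Finset.ite_sum_zero]
  refine Finset.sum_congr rfl fun ⟨p, q⟩ hpq => ?_
  rw [Finset.HasAntidiagonal.mem_antidiagonal] at hpq
  rw [hterm, hpq]

variable (A) in
/-- The power series supported in degrees divisible by `d`. -/
def truncDivSubring : Subring A⟦X⟧ where
  carrier := {x | truncDiv A d x = x}
  mul_mem' {x y} hx hy := by
    simp only [Set.mem_ofPred_eq] at *
    rw [truncDiv_mul_of_truncDiv_eq d hy, hx]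
  one_mem' := truncDiv_one d
  add_mem' {x y} hx hy := by
    simp only [Set.mem_ofPred_eq] at *
    rw [truncDiv_add, hx, hy]
  zero_mem' := by
    simpa using truncDiv_monomial d 0 (0 : A)
  neg_mem' {x} hx := by
    simp only [Set.mem_ofPred_eq] at *
    rw [truncDiv_neg, hx]

theorem mem_truncDivSubring {x : A⟦X⟧} : x ∈ truncDivSubring A d ↔ truncDiv A d x = x :=
  Iff.rfl

theorem C_mem_truncDivSubring (α : A) : C α ∈ truncDivSubring A d := by
  rw [mem_truncDivSubring, ← monomial_zero_eq_C_apply, truncDiv_monomial, if_pos (dvd_zero d)]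

theorem X_pow_mem_truncDivSubring {m : ℕ} (hm : d ∣ m) : (X : A⟦X⟧) ^ m ∈ truncDivSubring A d := by
  simpa [mem_truncDivSubring, X_pow_eq, hm] using truncDiv_monomial d m (1 : A)

/-- Truncation is linear over `truncDivSubring A d`, so `(y⁻¹)[d]` is again an inverse of `y`. -/
theorem inverse_mem_truncDivSubring {y : A⟦X⟧} (hy : y ∈ truncDivSubring A d) :
    Ring.inverse y ∈ truncDivSubring A d := by
  by_cases hu : IsUnit y
  · have h : truncDiv A d (Ring.inverse y) * y = 1 := by
      rw [← truncDiv_mul_of_truncDiv_eq d hy, Ring.inverse_mul_cancel y hu, truncDiv_one]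
    simpa [mem_truncDivSubring] using (Ring.eq_mul_inverse_iff_mul_eq _ 1 y hu).2 h
  · rw [Ring.inverse_non_unit y hu]
    exact zero_mem _

end TruncDiv

section GeometricSeries

variable {R : Type*} [CommRing R] {x c c' : R}

theorem pow_mul_sum_Icc_mul_sub (hc : c * c' = 1) (e : ℕ) :
    c ^ e * (∑ u ∈ Finset.Icc 1 e, c' ^ u * x ^ u) * (x - c) = x * (x ^ e - c ^ e) := by
  induction e with
  | zero => simp
  | succ e ih =>
    have hpow : c ^ (e + 1) * c' ^ (e + 1) = 1 := by rw [← mul_pow, hc, one_pow]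
    rw [Finset.sum_Icc_succ_top (by omega)]
    linear_combination c * ih + x ^ (e + 1) * (x - c) * hpow

theorem mul_inverse_sub_eq_sum_mul_inverse_pow_sub (hc : c * c' = 1) {e : ℕ} (hu : IsUnit (x ^ e - c ^ e)) :
    x * Ring.inverse (x - c) =
      (∑ u ∈ Finset.Icc 1 e, c' ^ u * x ^ u) * (c ^ e * Ring.inverse (x ^ e - c ^ e)) := by
  have hu' : IsUnit (x - c) := isUnit_of_dvd_unit (sub_dvd_pow_sub_pow x c e) hu
  calc x * Ring.inverse (x - c)
      = x * (x ^ e - c ^ e) * Ring.inverse (x ^ e - c ^ e) * Ring.inverse (x - c) := by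
        rw [Ring.mul_inverse_cancel_right _ _ hu]
    _ = c ^ e * (∑ u ∈ Finset.Icc 1 e, c' ^ u * x ^ u) * (x - c) * Ring.inverse (x - c) *
          Ring.inverse (x ^ e - c ^ e) := by
        rw [← pow_mul_sum_Icc_mul_sub hc]; ring
    _ = _ := by rw [Ring.mul_inverse_cancel_right _ _ hu']; ring

end GeometricSeries

theorem prod_zpow_eq_zpow_sum {G ι : Type*} [CommGroup G] (g : G) (s : Finset ι) (f : ι → ℤ) :
    ∏ i ∈ s, g ^ f i = g ^ ∑ i ∈ s, f i := by
  induction s using Finset.cons_induction with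
  | empty => simp
  | cons i s hi ih => rw [Finset.prod_cons, Finset.sum_cons, ih, zpow_add]

section UnitPowers

variable {A : Type*} [CommRing A] (L : Aˣ)

theorem C_zpow_pow (k : ℤ) (m : ℕ) :
    (C ((L ^ k : Aˣ) : A) : A⟦X⟧) ^ m = C ((L ^ (k * m) : Aˣ) : A) := by
  rw [← map_pow, ← Units.val_pow_eq_pow_val, ← zpow_natCast, ← zpow_mul]

theorem isUnit_X_pow_sub_C {m : ℕ} (hm : m ≠ 0) (α : Aˣ) :
    IsUnit ((X : A⟦X⟧) ^ m - C (α : A)) := by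
  simp [isUnit_iff_constantCoeff, hm]

theorem prod_C_zpow_mul_X_pow {ι : Type*} (s : Finset ι) (k : ι → ℤ) (m : ι → ℕ) :
    ∏ i ∈ s, C ((L ^ k i : Aˣ) : A) * (X : A⟦X⟧) ^ m i =
      C ((L ^ ∑ i ∈ s, k i : Aˣ) : A) * X ^ ∑ i ∈ s, m i := by
  rw [Finset.prod_mul_distrib, ← map_prod, ← Units.coe_prod, prod_zpow_eq_zpow_sum,
    Finset.prod_pow_eq_pow_sum]

theorem X_pow_mul_inverse_X_pow_sub_C (a : ℤ) {b e : ℕ} (hb : b ≠ 0) (he : e ≠ 0) :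
    (X : A⟦X⟧) ^ b * Ring.inverse (X ^ b - C ((L ^ a : Aˣ) : A)) =
      (∑ u ∈ Finset.Icc 1 e, C ((L ^ (-(a * u)) : Aˣ) : A) * X ^ (u * b)) *
        (C ((L ^ (a * e) : Aˣ) : A) * Ring.inverse (X ^ (b * e) - C ((L ^ (a * e) : Aˣ) : A))) := by
  have hc : C ((L ^ a : Aˣ) : A) * C ((L ^ (-a) : Aˣ) : A) = (1 : A⟦X⟧) := by
    rw [← map_mul, ← Units.val_mul, ← zpow_add, add_neg_cancel, zpow_zero, Units.val_one, map_one]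
  have hu := isUnit_X_pow_sub_C (mul_ne_zero hb he) (L ^ (a * e))
  rw [pow_mul, ← C_zpow_pow] at hu
  rw [mul_inverse_sub_eq_sum_mul_inverse_pow_sub hc hu, C_zpow_pow, ← pow_mul]
  congr 1
  refine Finset.sum_congr rfl fun u _ => ?_
  rw [C_zpow_pow, ← pow_mul, neg_mul, mul_comm b u]

end UnitPowers

theorem truncDiv_sum_C_mul_X_pow {A ι : Type*} [CommRing A] (d : ℕ) (s : Finset ι) (α : ι → A)
    (m : ι → ℕ) :
    truncDiv A d (∑ i ∈ s, C (α i) * X ^ m i) = ∑ i ∈ s with d ∣ m i, C (α i) * X ^ m i := by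
  rw [truncDiv_sum, Finset.sum_filter]
  refine Finset.sum_congr rfl fun i _ => ?_
  rw [← monomial_eq_C_mul_X_pow, truncDiv_monomial]

theorem stmt8_general {A : Type*} [CommRing A] (L : Aˣ) (n d : ℕ) (hd : 1 ≤ d)
    (a : Fin n → ℤ) (b : Fin n → ℕ) (hb : ∀ i, 1 ≤ b i)
    (e : Fin n → ℕ) (he : ∀ i, e i = Nat.lcm (b i) d / b i) :
    truncDiv A d
      (∏ i, (PowerSeries.X : PowerSeries A) ^ (b i) *
        Ring.inverse ((PowerSeries.X : PowerSeries A) ^ (b i) -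
          PowerSeries.C ((L ^ (a i) : Aˣ) : A))) =
    (∑ u ∈ (Fintype.piFinset fun i => Finset.Icc 1 (e i)).filter
        (fun u => d ∣ ∑ i, u i * b i),
      PowerSeries.C ((L ^ (-(∑ i, a i * (u i : ℤ))) : Aˣ) : A) *
        (PowerSeries.X : PowerSeries A) ^ (∑ i, u i * b i)) *
    ∏ i, PowerSeries.C ((L ^ (a i * (e i : ℤ)) : Aˣ) : A) *
      Ring.inverse ((PowerSeries.X : PowerSeries A) ^ (b i * e i) -
        PowerSeries.C ((L ^ (a i * (e i : ℤ)) : Aˣ) : A)) := by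
  have hb0 (i : Fin n) : b i ≠ 0 := Nat.one_le_iff_ne_zero.1 (hb i)
  have hbe (i : Fin n) : b i * e i = Nat.lcm (b i) d := by
    rw [he i, Nat.mul_div_cancel' (Nat.dvd_lcm_left _ _)]
  have he0 (i : Fin n) : e i ≠ 0 := by
    refine right_ne_zero_of_mul (a := b i) ?_
    rw [hbe i]
    exact Nat.lcm_ne_zero (hb0 i) (Nat.one_le_iff_ne_zero.1 hd)
  have hG : (∏ i, C ((L ^ (a i * (e i : ℤ)) : Aˣ) : A) *
      Ring.inverse ((X : A⟦X⟧) ^ (b i * e i) - C ((L ^ (a i * (e i : ℤ)) : Aˣ) : A))) ∈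
        truncDivSubring A d := by
    refine Subring.prod_mem _ fun i _ => Subring.mul_mem _ (C_mem_truncDivSubring d _) ?_
    refine inverse_mem_truncDivSubring d (Subring.sub_mem _ ?_ (C_mem_truncDivSubring d _))
    exact X_pow_mem_truncDivSubring d (hbe i ▸ Nat.dvd_lcm_right _ _)
  rw [Finset.prod_congr rfl fun i _ => X_pow_mul_inverse_X_pow_sub_C L (a i) (hb0 i) (he0 i),
    Finset.prod_mul_distrib, truncDiv_mul_of_truncDiv_eq d hG, Finset.prod_univ_sum]
  simp only [prod_C_zpow_mul_X_pow, Finset.sum_neg_distrib]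
  rw [truncDiv_sum_C_mul_X_pow]

/-- the computation of `C_{a,b} = (∏ᵢ T^{bᵢ}(T^{bᵢ} - L^{aᵢ})⁻¹)[d]`:
with `eᵢ = lcm(bᵢ, d)/bᵢ` and `S` the set of tuples `u` with `1 ≤ uᵢ ≤ eᵢ` and
`d ∣ ∑ uᵢbᵢ`, one has
`C_{a,b} = (∑_{u ∈ S} L^{-a·u} T^{b·u}) · ∏ᵢ L^{aᵢeᵢ} (T^{bᵢeᵢ} - L^{aᵢeᵢ})⁻¹`. -/
theorem stmt8 {A : Type*} [CommRing A] (L : Aˣ) (n d : ℕ) (hn : 1 ≤ n) (hd : 1 ≤ d)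
    (a : Fin n → ℤ) (b : Fin n → ℕ) (hb : ∀ i, 1 ≤ b i)
    (e : Fin n → ℕ) (he : ∀ i, e i = Nat.lcm (b i) d / b i) :
    truncDiv A d
      (∏ i, (PowerSeries.X : PowerSeries A) ^ (b i) *
        Ring.inverse ((PowerSeries.X : PowerSeries A) ^ (b i) -
          PowerSeries.C ((L ^ (a i) : Aˣ) : A))) =
    (∑ u ∈ (Fintype.piFinset fun i => Finset.Icc 1 (e i)).filter
        (fun u => d ∣ ∑ i, u i * b i),
      PowerSeries.C ((L ^ (-(∑ i, a i * (u i : ℤ))) : Aˣ) : A) *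
        (PowerSeries.X : PowerSeries A) ^ (∑ i, u i * b i)) *
    ∏ i, PowerSeries.C ((L ^ (a i * (e i : ℤ)) : Aˣ) : A) *
      Ring.inverse ((PowerSeries.X : PowerSeries A) ^ (b i * e i) -
        PowerSeries.C ((L ^ (a i * (e i : ℤ)) : Aˣ) : A)) :=
  stmt8_general L n d hd a b hb e he
end

section
/- Let n ≥ 1 and d ≥ 1 be integers and b : Fin n → ℕ with b(i) ≥ 1 for all i. Set e(i) = lcm(b(i), d)/b(i) for each i, and let S be the set of tuples u : Fin n → ℕ with 1 ≤ u(i) ≤ e(i) for all i and d ∣ Σᵢ u(i)·b(i). Then the map S × (Fin n → ℕ) → { w : Fin n → ℕ | w(i) ≥ 1 for all i, and d ∣ Σᵢ w(i)·b(i) } sending (u, v) to the tuple i ↦ u(i) + v(i)·e(i) is a bijection. -/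
/-! Each coordinate `w ≥ 1` is written uniquely as `u + v e` with `1 ≤ u ≤ e`: this is division
with remainder of `w - 1` by `e`. Since `d ∣ e b` (as `e b = lcm(b, d)`), the summand `v e b`
never changes `∑ wᵢ bᵢ` modulo `d`, so the divisibility condition on `w` is the one on `u`. -/

open Set

namespace Nat

lemma add_mul_sub_one_div_mod {e u : ℕ} (he : 0 < e) (hu : 1 ≤ u ∧ u ≤ e) (v : ℕ) :
    (u + v * e - 1) / e = v ∧ (u + v * e - 1) % e = u - 1 :=
  (Nat.div_mod_unique he).2 ⟨by rw [Nat.mul_comm]; omega, by omega⟩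

lemma eq_and_eq_of_add_mul_eq {e u v u' v' : ℕ} (he : 0 < e) (hu : 1 ≤ u ∧ u ≤ e)
    (hu' : 1 ≤ u' ∧ u' ≤ e) (h : u + v * e = u' + v' * e) : u = u' ∧ v = v' := by
  obtain ⟨hv, hr⟩ := add_mul_sub_one_div_mod he hu v
  obtain ⟨hv', hr'⟩ := add_mul_sub_one_div_mod he hu' v'
  rw [h] at hv hr
  omega

lemma mod_add_one_add_div_mul {w : ℕ} (hw : 1 ≤ w) (e : ℕ) :
    (w - 1) % e + 1 + (w - 1) / e * e = w := by
  have := Nat.mod_add_div' (w - 1) e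
  omega

lemma lcm_div_left_pos {b d : ℕ} (hb : 0 < b) (hd : 0 < d) : 0 < b.lcm d / b :=
  Nat.div_pos (Nat.le_of_dvd (Nat.lcm_pos hb hd) (Nat.dvd_lcm_left b d)) hb

lemma dvd_lcm_div_left_mul (b d : ℕ) : d ∣ b.lcm d / b * b := by
  rw [Nat.div_mul_cancel (Nat.dvd_lcm_left b d)]
  exact Nat.dvd_lcm_right b d

end Nat

section

variable {ι : Type*}

lemma bijOn_add_mul_pi {e : ι → ℕ} (he : ∀ i, 0 < e i) :
    BijOn (fun p : (ι → ℕ) × (ι → ℕ) => fun i => p.1 i + p.2 i * e i)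
      ({u | ∀ i, 1 ≤ u i ∧ u i ≤ e i} ×ˢ univ) {w | ∀ i, 1 ≤ w i} := by
  refine ⟨?_, ?_, ?_⟩
  · rintro ⟨u, v⟩ ⟨hu, -⟩ i
    exact (hu i).1.trans (Nat.le_add_right _ _)
  · rintro ⟨u, v⟩ ⟨hu, -⟩ ⟨u', v'⟩ ⟨hu', -⟩ h
    have key i := Nat.eq_and_eq_of_add_mul_eq (he i) (hu i) (hu' i) (congrFun h i)
    exact Prod.ext (funext fun i => (key i).1) (funext fun i => (key i).2)
  · intro w hw
    refine ⟨⟨fun i => (w i - 1) % e i + 1, fun i => (w i - 1) / e i⟩, ⟨fun i => ?_, trivial⟩, ?_⟩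
    · exact ⟨Nat.le_add_left _ _, Nat.mod_lt _ (he i)⟩
    · exact funext fun i => Nat.mod_add_one_add_div_mul (hw i) (e i)

lemma dvd_sum_add_mul_mul_iff [Fintype ι] {d : ℕ} {b e : ι → ℕ} (hdvd : ∀ i, d ∣ e i * b i)
    (u v : ι → ℕ) : d ∣ ∑ i, (u i + v i * e i) * b i ↔ d ∣ ∑ i, u i * b i := by
  have hsplit : ∑ i, (u i + v i * e i) * b i = ∑ i, u i * b i + ∑ i, v i * (e i * b i) := by
    rw [← Finset.sum_add_distrib]
    exact Finset.sum_congr rfl fun i _ => by ring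
  rw [hsplit]
  exact Nat.dvd_add_left (Finset.dvd_sum fun i _ => (hdvd i).mul_left (v i))

end

theorem stmt9_general (n d : ℕ) (hd : 1 ≤ d)
    (b : Fin n → ℕ) (hb : ∀ i, 1 ≤ b i)
    (e : Fin n → ℕ) (he : ∀ i, e i = Nat.lcm (b i) d / b i) :
    Set.BijOn (fun p : (Fin n → ℕ) × (Fin n → ℕ) => fun i => p.1 i + p.2 i * e i)
      ({u : Fin n → ℕ | (∀ i, 1 ≤ u i ∧ u i ≤ e i) ∧ d ∣ ∑ i, u i * b i} ×ˢ
        (Set.univ : Set (Fin n → ℕ)))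
      {w : Fin n → ℕ | (∀ i, 1 ≤ w i) ∧ d ∣ ∑ i, w i * b i} := by
  have he_pos i : 0 < e i := he i ▸ Nat.lcm_div_left_pos (hb i) hd
  have hdvd i : d ∣ e i * b i := he i ▸ Nat.dvd_lcm_div_left_mul (b i) d
  have hcong (p : (Fin n → ℕ) × (Fin n → ℕ)) := dvd_sum_add_mul_mul_iff hdvd p.1 p.2
  have hbij := (bijOn_add_mul_pi he_pos).inter_mapsTo
    (s₂ := {p : (Fin n → ℕ) × (Fin n → ℕ) | d ∣ ∑ i, p.1 i * b i})
    (t₂ := {w : Fin n → ℕ | d ∣ ∑ i, w i * b i}) (fun p hp => (hcong p).2 hp)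
    (fun p hp => (hcong p).1 hp.2)
  rw [ofPred_and, ofPred_and, inter_prod, prod_univ (s := {u | d ∣ _})]
  exact hbij

/-- the combinatorial bijection of Lemma 6.3 (divis): with
`eᵢ = lcm(bᵢ, d)/bᵢ`, the map `(u, v) ↦ (i ↦ uᵢ + vᵢ eᵢ)` is a bijection from
`S × ℕ^n` onto `{w : wᵢ ≥ 1 for all i, and d ∣ ∑ wᵢbᵢ}`, where
`S = {u : 1 ≤ uᵢ ≤ eᵢ for all i, and d ∣ ∑ uᵢbᵢ}`. -/
theorem stmt9 (n d : ℕ) (hn : 1 ≤ n) (hd : 1 ≤ d)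
    (b : Fin n → ℕ) (hb : ∀ i, 1 ≤ b i)
    (e : Fin n → ℕ) (he : ∀ i, e i = Nat.lcm (b i) d / b i) :
    Set.BijOn (fun p : (Fin n → ℕ) × (Fin n → ℕ) => fun i => p.1 i + p.2 i * e i)
      ({u : Fin n → ℕ | (∀ i, 1 ≤ u i ∧ u i ≤ e i) ∧ d ∣ ∑ i, u i * b i} ×ˢ
        (Set.univ : Set (Fin n → ℕ)))
      {w : Fin n → ℕ | (∀ i, 1 ≤ w i) ∧ d ∣ ∑ i, w i * b i} :=
  stmt9_general n d hd b hb e he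
end

section
/- Let n ≥ 0 be an integer, let y : Fin (n+1) → ℝ satisfy 0 ≤ y(i) ≤ 1 for all i and ∏ᵢ y(i) = 0, and let ρ ∈ [0,1). Then there exists a unique s ∈ [0,1] such that ∏ᵢ ((1−s)·y(i) + s) = ρ. -/
/-!
Along the segment `s ↦ (1 - s) • y + s • 1` every coordinate `y i + s (1 - y i)` is nonnegative
and nondecreasing in `s`, positive for `s > 0`, and strictly increasing when `y i < 1`, as it is
for any `i` with `y i = 0`. So the product of the coordinates increases strictly from `∏ y = 0`
to `1`. The intermediate value theorem gives a point where it equals `ρ`, and strict monotonicity makes it unique.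
-/

open Set Finset

theorem Finset.prod_lt_prod_of_nonneg {ι R : Type*} [CommSemiring R] [PartialOrder R]
    [IsStrictOrderedRing R] {s : Finset ι} {f g : ι → R} (hf : ∀ i ∈ s, 0 ≤ f i)
    (hg : ∀ i ∈ s, 0 < g i) (hfg : ∀ i ∈ s, f i ≤ g i) (hlt : ∃ i ∈ s, f i < g i) :
    ∏ i ∈ s, f i < ∏ i ∈ s, g i := by
  classical
  obtain ⟨i, hi, hilt⟩ := hlt
  rw [← insert_erase hi, prod_insert (notMem_erase _ _), prod_insert (notMem_erase _ _)]
  calc f i * ∏ j ∈ s.erase i, f j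
      ≤ f i * ∏ j ∈ s.erase i, g j :=
        mul_le_mul_of_nonneg_left (prod_le_prod (fun j hj => hf j (mem_of_mem_erase hj))
          fun j hj => hfg j (mem_of_mem_erase hj)) (hf i hi)
    _ < g i * ∏ j ∈ s.erase i, g j :=
        mul_lt_mul_of_pos_right hilt (prod_pos fun j hj => hg j (mem_of_mem_erase hj))

section SegmentProd

variable {ι : Type*} [Fintype ι]

def segmentProd (y : ι → ℝ) (s : ℝ) : ℝ :=
  ∏ i, ((1 - s) * y i + s)

@[simp]
lemma segmentProd_zero (y : ι → ℝ) : segmentProd y 0 = ∏ i, y i := by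
  simp [segmentProd]

@[simp]
lemma segmentProd_one (y : ι → ℝ) : segmentProd y 1 = 1 := by
  simp [segmentProd]

lemma continuous_segmentProd (y : ι → ℝ) : Continuous (segmentProd y) :=
  continuous_finsetProd _ fun _ _ => by fun_prop

lemma strictMonoOn_segmentProd {y : ι → ℝ} (hy : ∀ i, 0 ≤ y i ∧ y i ≤ 1)
    (hlt : ∃ j, y j < 1) : StrictMonoOn (segmentProd y) (Icc 0 1) := by
  intro s hs t ht hst
  obtain ⟨j, hj⟩ := hlt
  refine prod_lt_prod_of_nonneg (fun i _ => ?_) (fun i _ => ?_) (fun i _ => ?_)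
    ⟨j, mem_univ j, ?_⟩
  · nlinarith [mul_nonneg (sub_nonneg.2 hs.2) (hy i).1, hs.1]
  · nlinarith [mul_nonneg (sub_nonneg.2 ht.2) (hy i).1, hs.1]
  · nlinarith [mul_le_mul_of_nonneg_right hst.le (sub_nonneg.2 (hy i).2)]
  · nlinarith [mul_lt_mul_of_pos_right hst (sub_pos.2 hj)]

end SegmentProd

/-- the segment joining a point `y` of `Σⁿ₀` to `(1,…,1)` meets `Σⁿ_ρ`
in exactly one point: there is a unique `s ∈ [0,1]` with `∏ᵢ ((1-s)yᵢ + s) = ρ`. -/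
theorem stmt10 (n : ℕ) (y : Fin (n + 1) → ℝ)
    (hy : ∀ i, 0 ≤ y i ∧ y i ≤ 1) (hprod : ∏ i, y i = 0)
    (ρ : ℝ) (hρ0 : 0 ≤ ρ) (hρ1 : ρ < 1) :
    ∃! s : ℝ, s ∈ Set.Icc (0 : ℝ) 1 ∧ ∏ i, ((1 - s) * y i + s) = ρ := by
  obtain ⟨j, -, hj⟩ := Finset.prod_eq_zero_iff.mp hprod
  have hmono := strictMonoOn_segmentProd hy ⟨j, hj.trans_lt one_pos⟩
  have hρ : ρ ∈ Icc (segmentProd y 0) (segmentProd y 1) := by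
    rw [segmentProd_zero, hprod, segmentProd_one]
    exact ⟨hρ0, hρ1.le⟩
  obtain ⟨s, hs, hρs⟩ :=
    intermediate_value_Icc zero_le_one (continuous_segmentProd y).continuousOn hρ
  exact ⟨s, ⟨hs, hρs⟩, fun t ⟨ht, hρt⟩ => hmono.injOn ht hs (hρt.trans hρs.symm)⟩
end

section
/- Let n ≥ 0 be an integer. Set Σⁿ₀ = { y ∈ ℝ^{Fin(n+1)} : 0 ≤ y(i) ≤ 1 for all i, and ∏ᵢ y(i) = 0 } with the subspace topology. Then there is a homeomorphism f from Σⁿ₀ × [0,1) onto the space { (x,ρ) ∈ ℝ^{Fin(n+1)} × ℝ : 0 ≤ x(i) ≤ 1 for all i, ∏ᵢ x(i) = ρ, and 0 ≤ ρ < 1 } (subspace topology) such that for every (y,ρ), the second component of f(y,ρ) is ρ and there exists s ∈ [0,1] with (f(y,ρ))₁(i) = (1−s)·y(i) + s for all i; i.e. f(y,ρ) is the unique intersection point of Σⁿ_ρ with the segment joining y to (1,…,1), paired with ρ. -/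
/-!
Every point `x` of `SigmaTot n` lies on exactly one segment from a point `y ∈ Σⁿ₀` to
`(1, …, 1)`: at parameter `s = minᵢ xᵢ`, with `y = (x - s) / (1 - s)`. Hence `(y, s)` are
coordinates identifying `SigmaTot n` with `Σⁿ₀ × [0,1)`. Along each segment
`ρ = ∏ᵢ ((1 - s) yᵢ + s)` is a continuous, strictly increasing bijection of `s ∈ [0,1]` onto
`[0,1]` (one factor equals `s`), so `(y, s) ↦ (y, ρ)` is a continuous bijection of the compact
Hausdorff space `Σⁿ₀ × [0,1]`, hence a homeomorphism, and it restricts to `Σⁿ₀ × [0,1)`.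
-/

/-- The simplex `Σⁿ₀ = {y ∈ [0,1]^{n+1} : ∏ yᵢ = 0}`. -/
def Sigma0 (n : ℕ) : Set (Fin (n + 1) → ℝ) :=
  {y | (∀ i, 0 ≤ y i ∧ y i ≤ 1) ∧ ∏ i, y i = 0}

/-- The total space `{(x, ρ) : x ∈ [0,1]^{n+1}, ∏ xᵢ = ρ, 0 ≤ ρ < 1}`. -/
def SigmaTot (n : ℕ) : Set ((Fin (n + 1) → ℝ) × ℝ) :=
  {p | (∀ i, 0 ≤ p.1 i ∧ p.1 i ≤ 1) ∧ ∏ i, p.1 i = p.2 ∧ 0 ≤ p.2 ∧ p.2 < 1}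

open Set Finset

section FiberwiseReparam

variable {X : Type*} [TopologicalSpace X]

structure IsUnitIntervalReparam (g : X → ℝ → ℝ) : Prop where
  continuous : Continuous fun p : X × ℝ => g p.1 p.2
  strictMonoOn : ∀ x, StrictMonoOn (g x) (Icc 0 1)
  map_zero : ∀ x, g x 0 = 0
  map_one : ∀ x, g x 1 = 1

namespace IsUnitIntervalReparam

variable {g : X → ℝ → ℝ} (hg : IsUnitIntervalReparam g)
include hg

theorem mem_Icc {x : X} {s : ℝ} (hs : s ∈ Icc (0 : ℝ) 1) : g x s ∈ Icc (0 : ℝ) 1 := by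
  have hmono := (hg.strictMonoOn x).monotoneOn
  refine ⟨?_, ?_⟩
  · simpa [hg.map_zero] using hmono (left_mem_Icc.2 zero_le_one) hs hs.1
  · simpa [hg.map_one] using hmono hs (right_mem_Icc.2 zero_le_one) hs.2

theorem lt_one {x : X} {s : ℝ} (hs : s ∈ Ico (0 : ℝ) 1) : g x s < 1 :=
  hg.map_one x ▸ hg.strictMonoOn x (Ico_subset_Icc_self hs) (right_mem_Icc.2 zero_le_one) hs.2

def fiberwiseMap (p : X × Icc (0 : ℝ) 1) : X × Icc (0 : ℝ) 1 :=
  (p.1, ⟨g p.1 p.2, hg.mem_Icc p.2.2⟩)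

theorem bijective_fiberwiseMap : Function.Bijective hg.fiberwiseMap := by
  refine ⟨fun ⟨x, s⟩ ⟨x', s'⟩ h => ?_, fun ⟨x, ρ⟩ => ?_⟩
  · simp only [fiberwiseMap, Prod.mk.injEq, Subtype.mk.injEq] at h
    obtain ⟨rfl, h⟩ := h
    exact Prod.ext rfl (Subtype.ext ((hg.strictMonoOn x).injOn s.2 s'.2 h))
  · have hcont : ContinuousOn (g x) (Icc 0 1) :=
      (hg.continuous.comp (Continuous.prodMk_right x)).continuousOn
    obtain ⟨s, hs, hgs⟩ := intermediate_value_Icc zero_le_one hcont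
      (by rw [hg.map_zero, hg.map_one]; exact ρ.2)
    exact ⟨(x, ⟨s, hs⟩), Prod.ext rfl (Subtype.ext hgs)⟩

theorem continuous_fiberwiseMap : Continuous hg.fiberwiseMap := by
  have := hg.continuous; unfold fiberwiseMap; fun_prop

variable [CompactSpace X] [T2Space X]

/-- Compactness of `X × [0,1]` is what makes the fiberwise inverse `(x, ρ) ↦ (x, (g x)⁻¹ ρ)`
continuous. -/
noncomputable def homeomorph : X × Icc (0 : ℝ) 1 ≃ₜ X × Icc (0 : ℝ) 1 :=
  hg.continuous_fiberwiseMap.homeoOfEquivCompactToT2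
    (f := Equiv.ofBijective _ hg.bijective_fiberwiseMap)

theorem homeomorph_apply (p : X × Icc (0 : ℝ) 1) : hg.homeomorph p = hg.fiberwiseMap p := rfl

theorem snd_homeomorph_symm_lt_one (p : X × Ico (0 : ℝ) 1) :
    ((hg.homeomorph.symm (p.1, ⟨p.2, Ico_subset_Icc_self p.2.2⟩)).2 : ℝ) < 1 := by
  set q := hg.homeomorph.symm (p.1, ⟨p.2, Ico_subset_Icc_self p.2.2⟩)
  have hq : g q.1 q.2 = p.2 := congrArg (fun r => (r.2 : ℝ)) (hg.homeomorph.apply_symm_apply _)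
  refine lt_of_le_of_ne q.2.2.2 fun h1 => (p.2.2.2).ne ?_
  rw [← hq, h1, hg.map_one]

noncomputable def homeomorphIco : X × Ico (0 : ℝ) 1 ≃ₜ X × Ico (0 : ℝ) 1 where
  toFun p := (p.1, ⟨g p.1 p.2, (hg.mem_Icc (Ico_subset_Icc_self p.2.2)).1, hg.lt_one p.2.2⟩)
  invFun p := ((hg.homeomorph.symm (p.1, ⟨p.2, Ico_subset_Icc_self p.2.2⟩)).1,
    ⟨_, (hg.homeomorph.symm _).2.2.1, hg.snd_homeomorph_symm_lt_one p⟩)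
  left_inv p := by
    have := hg.homeomorph.symm_apply_apply (p.1, ⟨p.2, Ico_subset_Icc_self p.2.2⟩)
    simp only [homeomorph_apply, fiberwiseMap] at this
    simp only [this]
  right_inv p := by
    have := hg.homeomorph.apply_symm_apply (p.1, ⟨p.2, Ico_subset_Icc_self p.2.2⟩)
    simp only [homeomorph_apply, fiberwiseMap, Prod.ext_iff, Subtype.ext_iff] at this
    exact Prod.ext this.1 (Subtype.ext this.2)
  continuous_toFun := by have := hg.continuous; fun_prop
  continuous_invFun := by
    have : Continuous fun p : X × Ico (0 : ℝ) 1 =>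
        hg.homeomorph.symm (p.1, ⟨p.2, Ico_subset_Icc_self p.2.2⟩) := by fun_prop
    fun_prop

end IsUnitIntervalReparam

end FiberwiseReparam

section SegmentPoint

variable {ι : Type*} {y : ι → ℝ} {s : ℝ} {i : ι}

def segmentPoint (y : ι → ℝ) (s : ℝ) : ι → ℝ := fun i => (1 - s) * y i + s

theorem segmentPoint_of_eq_zero (h : y i = 0) : segmentPoint y s i = s := by
  simp [segmentPoint, h]

theorem le_segmentPoint (hy : 0 ≤ y i) (hs : s ≤ 1) : s ≤ segmentPoint y s i := by
  unfold segmentPoint; nlinarith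

theorem segmentPoint_le_one (hy : y i ≤ 1) (hs : s ≤ 1) : segmentPoint y s i ≤ 1 := by
  unfold segmentPoint; nlinarith

theorem segmentPoint_mono (hy : y i ≤ 1) {t : ℝ} (hst : s ≤ t) :
    segmentPoint y s i ≤ segmentPoint y t i := by
  unfold segmentPoint; nlinarith

theorem sub_div_segmentPoint (hs : s ≠ 1) : (segmentPoint y s i - s) / (1 - s) = y i := by
  unfold segmentPoint; field_simp [sub_ne_zero.2 hs.symm]; ring

theorem segmentPoint_sub_div {x : ι → ℝ} {m : ℝ} (hm : m ≠ 1) :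
    segmentPoint (fun i => (x i - m) / (1 - m)) m = x := by
  funext i; unfold segmentPoint; field_simp [sub_ne_zero.2 hm.symm]; ring

theorem continuous_segmentPoint : Continuous fun p : (ι → ℝ) × ℝ => segmentPoint p.1 p.2 :=
  continuous_pi fun i => by unfold segmentPoint; fun_prop

variable [Fintype ι]

theorem strictMonoOn_prod_segmentPoint (hy : ∀ i, 0 ≤ y i ∧ y i ≤ 1) (h0 : ∏ i, y i = 0) :
    StrictMonoOn (fun s => ∏ i, segmentPoint y s i) (Icc 0 1) := by
  classical
  rintro s ⟨hs0, -⟩ t ⟨-, ht1⟩ hst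
  obtain ⟨j, -, hj⟩ := Finset.prod_eq_zero_iff.mp h0
  simp only [← Finset.mul_prod_erase univ _ (mem_univ j), segmentPoint_of_eq_zero hj]
  have hrest : 0 < ∏ i ∈ univ.erase j, segmentPoint y t i :=
    prod_pos fun i _ => (hs0.trans_lt hst).trans_le (le_segmentPoint (hy i).1 ht1)
  calc s * ∏ i ∈ univ.erase j, segmentPoint y s i
      ≤ s * ∏ i ∈ univ.erase j, segmentPoint y t i := by
        gcongr with i
        · exact fun i _ => hs0.trans (le_segmentPoint (hy i).1 (hst.le.trans ht1))
        · exact segmentPoint_mono (hy i).2 hst.le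
    _ < t * ∏ i ∈ univ.erase j, segmentPoint y t i := by gcongr

variable [Nonempty ι]

theorem inf'_segmentPoint (hy : ∀ i, 0 ≤ y i) (h0 : ∏ i, y i = 0) (hs : s ≤ 1) :
    univ.inf' univ_nonempty (segmentPoint y s) = s := by
  obtain ⟨j, -, hj⟩ := Finset.prod_eq_zero_iff.mp h0
  exact le_antisymm ((inf'_le _ (mem_univ j)).trans_eq (segmentPoint_of_eq_zero hj))
    (le_inf' _ _ fun i _ => le_segmentPoint (hy i) hs)

end SegmentPoint

theorem isCompact_sigma0 (n : ℕ) : IsCompact (Sigma0 n) := by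
  have : Sigma0 n = Set.Icc 0 1 ∩ {y | ∏ i, y i = 0} := by
    ext y; simp [Sigma0, Pi.le_def, forall_and]
  rw [this]
  exact isCompact_Icc.inter_right
    (isClosed_eq (continuous_finsetProd _ fun i _ => continuous_apply i) continuous_const)

instance (n : ℕ) : CompactSpace (Sigma0 n) := isCompact_iff_compactSpace.1 (isCompact_sigma0 n)

theorem isUnitIntervalReparam_prod_segmentPoint (n : ℕ) :
    IsUnitIntervalReparam fun (y : Sigma0 n) s => ∏ i, segmentPoint (y : Fin (n + 1) → ℝ) s i where
  continuous := continuous_finsetProd _ fun i _ => (continuous_apply i).comp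
    (continuous_segmentPoint.comp (continuous_subtype_val.prodMap continuous_id))
  strictMonoOn y := strictMonoOn_prod_segmentPoint y.2.1 y.2.2
  map_zero y := by simpa [segmentPoint] using y.2.2
  map_one y := by simp [segmentPoint]

section SigmaTot

variable {n : ℕ} {q : (Fin (n + 1) → ℝ) × ℝ}

theorem inf'_nonneg_of_mem_sigmaTot (hq : q ∈ SigmaTot n) : 0 ≤ univ.inf' univ_nonempty q.1 :=
  le_inf' _ _ fun i _ => (hq.1 i).1

theorem inf'_lt_one_of_mem_sigmaTot (hq : q ∈ SigmaTot n) :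
    univ.inf' univ_nonempty q.1 < 1 := by
  by_contra! h
  have hone : ∀ i, q.1 i = 1 := fun i => le_antisymm (hq.1 i).2 (h.trans (inf'_le _ (mem_univ i)))
  have := hq.2.2.2
  rw [← hq.2.1, prod_eq_one fun i _ => hone i] at this
  exact this.false

theorem sub_inf'_div_mem_sigma0 (hq : q ∈ SigmaTot n) :
    (fun i => (q.1 i - univ.inf' univ_nonempty q.1) / (1 - univ.inf' univ_nonempty q.1)) ∈
      Sigma0 n := by
  have hm : 0 < 1 - univ.inf' univ_nonempty q.1 := sub_pos.2 (inf'_lt_one_of_mem_sigmaTot hq)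
  refine ⟨fun i => ⟨div_nonneg (sub_nonneg.2 (inf'_le _ (mem_univ i))) hm.le, ?_⟩, ?_⟩
  · exact (div_le_one hm).2 (by linarith [(hq.1 i).2])
  · obtain ⟨j, -, hj⟩ := exists_mem_eq_inf' univ_nonempty q.1
    exact prod_eq_zero (mem_univ j) (by simp [hj])

end SigmaTot

noncomputable def segmentCoords (n : ℕ) : Sigma0 n × Ico (0 : ℝ) 1 ≃ₜ SigmaTot n where
  toFun p := ⟨(segmentPoint p.1 p.2, ∏ i, segmentPoint (p.1 : Fin (n + 1) → ℝ) p.2 i),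
    fun i => ⟨p.2.2.1.trans (le_segmentPoint (p.1.2.1 i).1 p.2.2.2.le),
      segmentPoint_le_one (p.1.2.1 i).2 p.2.2.2.le⟩, rfl,
    ((isUnitIntervalReparam_prod_segmentPoint n).mem_Icc (Ico_subset_Icc_self p.2.2)).1,
    (isUnitIntervalReparam_prod_segmentPoint n).lt_one p.2.2⟩
  invFun q := (⟨_, sub_inf'_div_mem_sigma0 q.2⟩,
    ⟨_, inf'_nonneg_of_mem_sigmaTot q.2, inf'_lt_one_of_mem_sigmaTot q.2⟩)
  left_inv := by
    rintro ⟨y, s⟩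
    have hm : univ.inf' univ_nonempty (segmentPoint (y : Fin (n + 1) → ℝ) s) = s :=
      inf'_segmentPoint (fun i => (y.2.1 i).1) y.2.2 s.2.2.le
    refine Prod.ext (Subtype.ext (funext fun i => ?_)) (Subtype.ext hm)
    simp only [hm]
    exact sub_div_segmentPoint s.2.2.ne
  right_inv q := by
    have hx := segmentPoint_sub_div (x := q.1.1) (inf'_lt_one_of_mem_sigmaTot q.2).ne
    refine Subtype.ext (Prod.ext hx ?_)
    simp only [hx]
    exact q.2.2.1
  continuous_toFun := by
    have h : Continuous fun p : Sigma0 n × Ico (0 : ℝ) 1 =>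
        segmentPoint (p.1 : Fin (n + 1) → ℝ) p.2 :=
      continuous_segmentPoint.comp (continuous_subtype_val.prodMap continuous_subtype_val)
    exact (h.prodMk (continuous_finsetProd _ fun i _ => (continuous_apply i).comp h)).subtype_mk _
  continuous_invFun := by
    have hx : Continuous fun q : SigmaTot n => q.1.1 := continuous_fst.comp continuous_subtype_val
    have hm : Continuous fun q : SigmaTot n => univ.inf' univ_nonempty q.1.1 :=
      Continuous.finset_inf'_apply _ fun i _ => (continuous_apply i).comp hx
    refine (Continuous.subtype_mk (continuous_pi fun i => ?_) _).prodMk (hm.subtype_mk _)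
    exact (((continuous_apply i).comp hx).sub hm).div (continuous_const.sub hm)
      fun q => (sub_pos.2 (inf'_lt_one_of_mem_sigmaTot q.2)).ne'

/-- there is a homeomorphism `f : Σⁿ₀ × [0,1) ≃ₜ {(x,ρ) : x ∈ Σⁿ_ρ, ρ ∈ [0,1)}`
compatible with the projection to `ρ`, sending `(y, ρ)` to the unique intersection point
of `Σⁿ_ρ` with the segment joining `y` to `(1,…,1)`, paired with `ρ`. -/
theorem stmt11 (n : ℕ) :
    ∃ f : (Sigma0 n × Set.Ico (0 : ℝ) 1) ≃ₜ SigmaTot n,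
      ∀ (y : Sigma0 n) (ρ : Set.Ico (0 : ℝ) 1),
        ((f (y, ρ) : (Fin (n + 1) → ℝ) × ℝ)).2 = (ρ : ℝ) ∧
        ∃ s ∈ Set.Icc (0 : ℝ) 1,
          ∀ i, ((f (y, ρ) : (Fin (n + 1) → ℝ) × ℝ)).1 i =
            (1 - s) * (y : Fin (n + 1) → ℝ) i + s := by
  set R := (isUnitIntervalReparam_prod_segmentPoint n).homeomorphIco
  refine ⟨R.symm.trans (segmentCoords n), fun y ρ => ?_⟩
  obtain ⟨⟨y', s⟩, hys⟩ : ∃ p, R.symm (y, ρ) = p := ⟨_, rfl⟩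
  have hR := R.apply_symm_apply (y, ρ)
  rw [hys] at hR
  obtain rfl : y = y' := (congrArg Prod.fst hR).symm
  have hρ : ∏ i, segmentPoint (y : Fin (n + 1) → ℝ) s i = ρ :=
    congrArg (fun p => (p.2 : ℝ)) hR
  rw [Homeomorph.trans_apply, hys]
  exact ⟨hρ, s, Ico_subset_Icc_self s.2, fun i => rfl⟩
end

section
/- Let C be the category whose objects are the natural numbers and whose morphisms m ⟶ n are all functions Fin(m+1) → Fin(n+1), and let D be the wide subcategory of C with the same objects and only the injective functions, with inclusion functor ι : D ⥤ C. Let H : (Dᵒᵖ ⥤ Type) ⥤ (Cᵒᵖ ⥤ Type) be the left Kan extension along ιᵒᵖ, i.e. the left adjoint of the restriction functor G = (ιᵒᵖ ∘ −). Then the functor H is faithful. -/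
open CategoryTheory Opposite

/-- The category whose objects are the natural numbers and whose morphisms
`m ⟶ n` are all functions `Fin (m+1) → Fin (n+1)`. -/
structure UCat where
  len : ℕ

instance : Category UCat where
  Hom a b := Fin (a.len + 1) → Fin (b.len + 1)
  id _ := id
  comp f g := g ∘ f

/-- The wide subcategory of `UCat` with only the injective functions. -/
structure UDCat where
  len : ℕ

instance : Category UDCat where
  Hom a b := {f : Fin (a.len + 1) → Fin (b.len + 1) // Function.Injective f}
  id _ := ⟨id, Function.injective_id⟩
  comp f g := ⟨g.1 ∘ f.1, g.2.comp f.2⟩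

/-- The inclusion functor. -/
def inclUDC : UDCat ⥤ UCat where
  obj a := ⟨a.len⟩
  map f := f.1

/-! A left adjoint is faithful once every unit component `Y ⟶ G (H Y)` is mono, and since every
map `Y ⟶ G T` factors through the unit, it suffices to separate maps into `Y` by such maps.
They come from the presheaf `c ↦ ((ι d₀ ⟶ c) → Set (Y d₀))` on `C`: a section `y` over `d` goes
to `g ↦ {Y(f) y | ι f = g}`, which evaluates to `{y}` at `g = 𝟙`. Naturality of this assignment
needs that a map whose composite with some `ι v` lies in the image of `ι` is itself in that
image; for the inclusion of injections this says that `v ∘ g` injective forces `g` injective. -/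

namespace CategoryTheory.Adjunction

variable {C D : Type*} [Category C] [Category D] {L : C ⥤ D} {R : D ⥤ C}

lemma mono_unit_app_of_cancel (adj : L ⊣ R) {Y : C}
    (h : ∀ {X : C} (a b : X ⟶ Y), (∀ (T : D) (e : Y ⟶ R.obj T), a ≫ e = b ≫ e) → a = b) :
    Mono (adj.unit.app Y) where
  right_cancellation a b hab := h a b fun T e => by
    rw [← (adj.unit_comp_map_eq_iff _ e).2 rfl, reassoc_of% hab]

end CategoryTheory.Adjunction

namespace CategoryTheory.Functor

universe v u₁ u₂
variable {C : Type u₁} {D : Type u₂} [Category.{v} C] [Category.{v} D]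

def LiftsLeftFactors (ι : D ⥤ C) : Prop :=
  ∀ ⦃a b c : D⦄ (g : ι.obj a ⟶ ι.obj b) (v : b ⟶ c) (f : a ⟶ c), g ≫ ι.map v = ι.map f →
    ∃ u, ι.map u = g

def liftPresheaf (ι : D ⥤ C) (Y : Dᵒᵖ ⥤ Type v) (d₀ : D) : Cᵒᵖ ⥤ Type v where
  obj c := (ι.obj d₀ ⟶ c.unop) → Set (Y.obj (op d₀))
  map h := TypeCat.ofHom fun s g => s (g ≫ h.unop)

variable {ι : D ⥤ C} [ι.Faithful]

def toLiftPresheaf (hι : ι.LiftsLeftFactors) (Y : Dᵒᵖ ⥤ Type v) (d₀ : D) : Y ⟶ ι.op ⋙ ι.liftPresheaf Y d₀ where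
  app d := TypeCat.ofHom fun y g => (fun f : d₀ ⟶ d.unop => Y.map f.op y) '' {f | ι.map f = g}
  naturality d d' v := by
    ext y
    funext g
    change (fun f => Y.map f.op (Y.map v y)) '' {f | ι.map f = g}
      = (fun f => Y.map f.op y) '' {f | ι.map f = g ≫ ι.map v.unop}
    ext z
    constructor
    · rintro ⟨u, rfl, rfl⟩
      exact ⟨u ≫ v.unop, ι.map_comp _ _, by simp⟩
    · rintro ⟨f, hf, rfl⟩
      obtain ⟨u, rfl⟩ := hι _ v.unop f hf.symm
      obtain rfl : u ≫ v.unop = f := ι.map_injective (by rw [hf, ι.map_comp])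
      exact ⟨u, rfl, by simp⟩

lemma toLiftPresheaf_app_self_id (hι : ι.LiftsLeftFactors) (Y : Dᵒᵖ ⥤ Type v) (d : Dᵒᵖ) (y : Y.obj d) :
    (toLiftPresheaf hι Y d.unop).app d y (𝟙 _) = {y} := by
  change (fun f : d.unop ⟶ d.unop => Y.map f.op y) '' {f | ι.map f = 𝟙 _} = _
  simp only [← ι.map_id, ι.map_injective.eq_iff, Set.ofPred_eq_eq_singleton, Set.image_singleton]
  simp

lemma hom_ext_of_comp_toLiftPresheaf (hι : ι.LiftsLeftFactors) {X Y : Dᵒᵖ ⥤ Type v} {a b : X ⟶ Y}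
    (h : ∀ d₀, a ≫ toLiftPresheaf hι Y d₀ = b ≫ toLiftPresheaf hι Y d₀) : a = b := by
  ext d x
  have := congr_fun (congr_arg (fun φ : X ⟶ _ => φ.app d x) (h d.unop)) (𝟙 _)
  rwa [NatTrans.comp_app_apply, NatTrans.comp_app_apply, toLiftPresheaf_app_self_id,
    toLiftPresheaf_app_self_id, Set.singleton_eq_singleton_iff] at this

theorem faithful_of_adjunction_whiskeringLeft (hι : ι.LiftsLeftFactors)
    {L : (Dᵒᵖ ⥤ Type v) ⥤ (Cᵒᵖ ⥤ Type v)}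
    (adj : L ⊣ (whiskeringLeft Dᵒᵖ Cᵒᵖ (Type v)).obj ι.op) : L.Faithful :=
  have (Y : Dᵒᵖ ⥤ Type v) : Mono (adj.unit.app Y) :=
    adj.mono_unit_app_of_cancel fun _ _ h =>
      hom_ext_of_comp_toLiftPresheaf hι fun d₀ => h _ (toLiftPresheaf hι Y d₀)
  adj.faithful_L_of_mono_unit_app

end CategoryTheory.Functor

instance : inclUDC.Faithful where
  map_injective h := Subtype.ext h

lemma inclUDC_liftsLeftFactors : inclUDC.LiftsLeftFactors := fun _ _ _ g v f h =>
  ⟨⟨g, Function.Injective.of_comp (f := v.1) ((show v.1 ∘ g = f.1 from h) ▸ f.2)⟩, rfl⟩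

/-- any left adjoint `H` of the restriction functor along `ιᵒᵖ`
(i.e. the left Kan extension along `ιᵒᵖ`) is faithful. -/
theorem stmt12 (H : (UDCatᵒᵖ ⥤ Type) ⥤ (UCatᵒᵖ ⥤ Type))
    (adj : H ⊣ (Functor.whiskeringLeft UDCatᵒᵖ UCatᵒᵖ Type).obj inclUDC.op) :
    H.Faithful :=
  Functor.faithful_of_adjunction_whiskeringLeft inclUDC_liftsLeftFactors adj
end

section
/- Let C be the category whose objects are the natural numbers and whose morphisms m ⟶ n are all functions Fin(m+1) → Fin(n+1), let D be the wide subcategory of C with only the injective functions, ι : D ⥤ C the inclusion, and H the left Kan extension functor (Dᵒᵖ ⥤ Type) ⥤ (Cᵒᵖ ⥤ Type) along ιᵒᵖ. Then for every presheaf S : Dᵒᵖ ⥤ Type, the simplicial set H(S) is nondegenerate: for every injective function α : Fin(m+1) → Fin(n+1) (a morphism of D), the induced map H(S)(n) → H(S)(m) sends nondegenerate n-simplices to nondegenerate m-simplices. -/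
open CategoryTheory Opposite

/-- An `x`-simplex `γ` of an unoriented simplicial set `F` is degenerate if
`x.len ≥ 1` and `γ` lies in the image of the map `F(g)` induced by some function
`g : Fin (x.len + 1) → Fin x.len`. -/
def IsDegenerate (F : UCatᵒᵖ ⥤ Type) (x : UCat) (γ : F.obj (op x)) : Prop :=
  ∃ m : UCat, x.len = m.len + 1 ∧ ∃ g : x ⟶ m, γ ∈ Set.range (F.map g.op)

/-- An unoriented simplicial set is nondegenerate if the maps induced by injective
functions take nondegenerate simplices to nondegenerate ones. -/
def IsNondegenerateSSet (F : UCatᵒᵖ ⥤ Type) : Prop :=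
  ∀ (a b : UCat) (α : a ⟶ b), Function.Injective α →
    ∀ γ : F.obj (op b), ¬ IsDegenerate F b γ → ¬ IsDegenerate F a (F.map α.op γ)

/-! An `n`-simplex of the left Kan extension of `S` is represented by a pair `(f, s)` with
`f : Fin (n+1) → Fin (d+1)` and `s ∈ S(d)`, and whether `f` is injective does not depend on the
representative, because the identifications only compose `f` with injective maps. A simplex is
degenerate exactly when `f` is not injective: a non-injective `f` factors through `Fin n`, and a
function factoring through `Fin n` is not injective. Composing with an injective `α` keeps `f`
injective, so this explicit model is nondegenerate. The adjunction exhibits `H(S)` as a retract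
of the model, and nondegeneracy passes to retracts. -/

lemma IsDegenerate.map {F G : UCatᵒᵖ ⥤ Type} (φ : F ⟶ G) {x : UCat} {γ : F.obj (op x)}
    (h : IsDegenerate F x γ) : IsDegenerate G x (φ.app (op x) γ) := by
  obtain ⟨m, hm, g, δ, rfl⟩ := h
  exact ⟨m, hm, g, φ.app _ δ, (NatTrans.naturality_apply φ g.op δ).symm⟩

lemma IsNondegenerateSSet.of_retract {F G : UCatᵒᵖ ⥤ Type} (e : Retract F G)
    (hG : IsNondegenerateSSet G) : IsNondegenerateSSet F := by
  intro a b α hα γ hγ hdeg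
  have hri : e.r.app (op b) (e.i.app (op b) γ) = γ := by
    rw [← NatTrans.comp_app_apply, e.retract]
    rfl
  have hiγ : ¬ IsDegenerate G b (e.i.app (op b) γ) := fun h => hγ (hri ▸ h.map e.r)
  exact hG a b α hα _ hiγ (NatTrans.naturality_apply e.i α.op γ ▸ hdeg.map e.i)

lemma Fin.exists_comp_eq_of_not_injective {n : ℕ} {β : Type*} {f : Fin (n + 2) → β}
    (hf : ¬ Function.Injective f) :
    ∃ (g : Fin (n + 2) → Fin (n + 1)) (h : Fin (n + 1) → β), h ∘ g = f := by
  obtain ⟨i, j, hfij, hij⟩ := Function.not_injective_iff.mp hf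
  have hne : ∀ k, (if k = j then i else k) ≠ j := fun k => by
    split_ifs with hk
    · exact hij
    · exact hk
  -- `g` collapses `j` onto `i` and is otherwise the inverse of `j.succAbove`.
  choose g hg using fun k => Fin.exists_succAbove_eq (hne k)
  refine ⟨g, f ∘ j.succAbove, funext fun k => ?_⟩
  simp only [Function.comp_apply, hg]
  split_ifs with hk
  · rw [hfij, hk]
  · rfl

namespace LanIncl

variable (S : UDCatᵒᵖ ⥤ Type)

/-- `⟨d, f, s⟩` stands for the `n`-simplex `f^* s`, where `s ∈ S(d)` and `f : [n] → [d]`. -/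
def Rep (n : ℕ) : Type :=
  Σ d : ℕ, (Fin (n + 1) → Fin (d + 1)) × S.obj (op ⟨d⟩)

/-- The relation `⟨d, j ∘ f, s⟩ ~ ⟨d', f, j^* s⟩` for injective `j : [d'] → [d]`. -/
def Rel (n : ℕ) (x y : Rep S n) : Prop :=
  ∃ j : (⟨y.1⟩ : UDCat) ⟶ ⟨x.1⟩, x.2.1 = j.1 ∘ y.2.1 ∧ y.2.2 = S.map j.op x.2.2

def model : UCatᵒᵖ ⥤ Type where
  obj x := Quot (Rel S x.unop.len)
  map α := TypeCat.ofHom <| Quot.map (fun t => ⟨t.1, t.2.1 ∘ α.unop, t.2.2⟩)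
    fun _ _ ⟨j, hf, hs⟩ => ⟨j, by rw [hf]; rfl, hs⟩
  map_id x := by
    ext γ
    induction γ using Quot.ind
    rfl
  map_comp _ _ := by
    ext γ
    induction γ using Quot.ind
    rfl

variable {S}

def mk {x : UCat} (d : ℕ) (f : Fin (x.len + 1) → Fin (d + 1)) (s : S.obj (op ⟨d⟩)) :
    (model S).obj (op x) :=
  Quot.mk _ ⟨d, f, s⟩

lemma exists_eq_mk {x : UCat} (γ : (model S).obj (op x)) : ∃ d f s, γ = mk (x := x) d f s := by
  obtain ⟨⟨d, f, s⟩, rfl⟩ := Quot.exists_rep γ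
  exact ⟨d, f, s, rfl⟩

lemma model_map_mk {x y : UCat} (α : y ⟶ x) (d : ℕ) (f : Fin (x.len + 1) → Fin (d + 1))
    (s : S.obj (op ⟨d⟩)) : (model S).map α.op (mk d f s) = mk d (f ∘ α) s :=
  rfl

lemma mk_comp {x : UCat} {d d' : ℕ} (j : (⟨d'⟩ : UDCat) ⟶ ⟨d⟩)
    (f : Fin (x.len + 1) → Fin (d' + 1)) (s : S.obj (op ⟨d⟩)) :
    mk d (j.1 ∘ f) s = mk d' f (S.map j.op s) :=
  Quot.sound ⟨j, rfl, rfl⟩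

def IsInjective {x : UCat} : (model S).obj (op x) → Prop :=
  Quot.lift (fun t => Function.Injective t.2.1) fun _ _ ⟨j, hf, _⟩ => by
    simp only [hf]
    exact propext (j.2.of_comp_iff _)

lemma isInjective_mk {x : UCat} (d : ℕ) (f : Fin (x.len + 1) → Fin (d + 1))
    (s : S.obj (op ⟨d⟩)) : IsInjective (mk d f s) ↔ Function.Injective f :=
  Iff.rfl

lemma isInjective_map {x y : UCat} {α : y ⟶ x} (hα : Function.Injective α)
    {γ : (model S).obj (op x)} (hγ : IsInjective γ) : IsInjective ((model S).map α.op γ) := by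
  obtain ⟨d, f, s, rfl⟩ := exists_eq_mk γ
  rw [model_map_mk, isInjective_mk] at *
  exact hγ.comp hα

lemma isDegenerate_iff_not_isInjective {x : UCat} (γ : (model S).obj (op x)) :
    IsDegenerate (model S) x γ ↔ ¬ IsInjective γ := by
  obtain ⟨d, f, s, rfl⟩ := exists_eq_mk γ
  rw [isInjective_mk]
  constructor
  · rintro ⟨m, hm, g, δ, hδ⟩ hf
    obtain ⟨d', f', s', rfl⟩ := exists_eq_mk δ
    rw [model_map_mk] at hδ
    have hf'g : Function.Injective (f' ∘ g) := by
      rwa [← isInjective_mk d' _ s', hδ, isInjective_mk]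
    have hle := Fin.le_of_injective g (hf'g.of_comp (f := f'))
    omega
  · intro hf
    obtain ⟨_ | n⟩ := x
    · exact absurd (Function.injective_of_subsingleton (α := Fin 1) f) hf
    · obtain ⟨g, h, hhg⟩ := Fin.exists_comp_eq_of_not_injective hf
      exact ⟨⟨n⟩, rfl, g, mk d h s, by rw [model_map_mk]; exact congrArg (mk d · s) hhg⟩

lemma isNondegenerateSSet_model : IsNondegenerateSSet (model S) := by
  intro a b α hα γ hγ
  rw [isDegenerate_iff_not_isInjective, not_not] at hγ ⊢
  exact isInjective_map hα hγ

variable (S) in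
def unit : S ⟶ inclUDC.op ⋙ model S where
  app d := TypeCat.ofHom fun s => mk (x := ⟨d.unop.len⟩) d.unop.len id s
  naturality _ _ j := by
    ext s
    exact (mk_comp (x := ⟨_⟩) j.unop id s).symm

def desc {X : UCatᵒᵖ ⥤ Type} (η : S ⟶ inclUDC.op ⋙ X) : model S ⟶ X where
  app x := TypeCat.ofHom <| Quot.lift
    (fun (t : Rep S x.unop.len) =>
      X.map (show x.unop ⟶ ⟨t.1⟩ from t.2.1).op (η.app (op ⟨t.1⟩) t.2.2))
    (by
      rintro ⟨_, _, s⟩ ⟨_, f, _⟩ ⟨j, hf, hs⟩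
      dsimp only at hf hs ⊢
      rw [hf, hs, NatTrans.naturality_apply]
      exact X.map_comp_apply (inclUDC.map j).op (show x.unop ⟶ ⟨_⟩ from f).op _)
  naturality x _ α := by
    ext γ
    induction γ using Quot.ind with | _ t =>
    exact X.map_comp_apply (show x.unop ⟶ ⟨t.1⟩ from t.2.1).op α _

lemma desc_mk {X : UCatᵒᵖ ⥤ Type} (η : S ⟶ inclUDC.op ⋙ X) {x : UCat} (d : ℕ)
    (f : x ⟶ ⟨d⟩) (s : S.obj (op ⟨d⟩)) :
    (desc η).app (op x) (mk d f s) = X.map f.op (η.app (op ⟨d⟩) s) :=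
  rfl

lemma unit_comp_desc {X : UCatᵒᵖ ⥤ Type} (η : S ⟶ inclUDC.op ⋙ X) :
    unit S ≫ Functor.whiskerLeft inclUDC.op (desc η) = η := by
  ext d s
  exact (desc_mk η _ (𝟙 _) s).trans (X.map_id_apply _ _)

def retractOfAdjunction {H : (UDCatᵒᵖ ⥤ Type) ⥤ (UCatᵒᵖ ⥤ Type)}
    (adj : H ⊣ (Functor.whiskeringLeft UDCatᵒᵖ UCatᵒᵖ Type).obj inclUDC.op) :
    Retract (H.obj S) (model S) where
  i := (adj.homEquiv _ _).symm (unit S)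
  r := desc (adj.unit.app S)
  retract := by
    apply (adj.homEquiv _ _).injective
    rw [Adjunction.homEquiv_naturality_right, Equiv.apply_symm_apply, Adjunction.homEquiv_id]
    exact unit_comp_desc _

end LanIncl

/-- for any left adjoint `H` of the restriction functor along `ιᵒᵖ`
and any presheaf `S` on the injective category, `H(S)` is nondegenerate. -/
theorem stmt13 (H : (UDCatᵒᵖ ⥤ Type) ⥤ (UCatᵒᵖ ⥤ Type))
    (adj : H ⊣ (Functor.whiskeringLeft UDCatᵒᵖ UCatᵒᵖ Type).obj inclUDC.op)
    (S : UDCatᵒᵖ ⥤ Type) :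
    IsNondegenerateSSet (H.obj S) :=
  LanIncl.isNondegenerateSSet_model.of_retract (LanIncl.retractOfAdjunction adj)
end

section
/- Let C be the category whose objects are the natural numbers and whose morphisms m ⟶ n are all functions Fin(m+1) → Fin(n+1), and let D be the wide subcategory of C with only the injective functions. Let NDSSet be the category whose objects are the nondegenerate presheaves Σ : Cᵒᵖ ⥤ Type and whose morphisms are the nondegenerate natural transformations (those whose components send nondegenerate simplices to nondegenerate simplices). Then the category of presheaves Dᵒᵖ ⥤ Type is equivalent to NDSSet. -/
/-!
Every function `Fin (n+1) → Fin (m+1)` factors as a surjection followed by an injection, uniquely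
up to a bijection in the middle; correspondingly every simplex is a surjective degeneracy of a
nondegenerate simplex, uniquely up to a bijection (Eilenberg–Zilber). So a nondegenerate morphism
is determined by its values on nondegenerate simplices, and every morphism between presheaves of
nondegenerate simplices extends: taking nondegenerate simplices is fully faithful. It is
essentially surjective because a presheaf `X` on injections is the presheaf of nondegenerate
simplices of its left Kan extension `withDegeneracies X`, whose `n`-simplices are pairs of a
surjection `[n] → [k]` and an element of `X [k]`, modulo bijections of `[k]`.
-/

open CategoryTheory Opposite

/-- A natural transformation preserves nondegeneracy if its components send
nondegenerate simplices to nondegenerate simplices. -/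
def PreservesND {F G : UCatᵒᵖ ⥤ Type} (η : F ⟶ G) : Prop :=
  ∀ (x : UCat) (γ : F.obj (op x)), ¬ IsDegenerate F x γ → ¬ IsDegenerate G x (η.app (op x) γ)

/-- The category of nondegenerate unoriented simplicial sets with nondegenerate
morphisms between them. -/
structure NDSSet where
  F : UCatᵒᵖ ⥤ Type
  nd : IsNondegenerateSSet F

instance : Category NDSSet where
  Hom X Y := {η : X.F ⟶ Y.F // PreservesND η}
  id X := ⟨𝟙 X.F, by
    intro x γ h
    simpa using h⟩
  comp f g := ⟨f.1 ≫ g.1, by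
    intro x γ h
    have h1 := f.2 x γ h
    have h2 := g.2 x _ h1
    simpa using h2⟩


open CategoryTheory Opposite Function

lemma map_comp_op_apply {C : Type*} [Category C] (F : Cᵒᵖ ⥤ Type*) {x y z : C} (f : x ⟶ y)
    (g : y ⟶ z) (a : F.obj (op z)) : F.map (f ≫ g).op a = F.map f.op (F.map g.op a) := by
  simp

lemma apply_eq_of_forall_ne {α β : Type*} {σ τ : α → β} (hσ : Surjective σ) (hτ : Injective τ)
    {y : α} (h : ∀ z, z ≠ y → σ z = τ z) : σ y = τ y := by
  obtain ⟨z, hz⟩ := hσ (τ y)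
  by_cases hzy : z = y
  · rwa [hzy] at hz
  · exact absurd (hτ ((h z hzy).symm.trans hz)) hzy

namespace UCat

variable {x y z : UCat}

@[simp] lemma comp_apply (f : x ⟶ y) (g : y ⟶ z) (a : Fin (x.len + 1)) : (f ≫ g) a = g (f a) :=
  rfl

@[simp] lemma id_apply (a : Fin (x.len + 1)) : (𝟙 x : x ⟶ x) a = a :=
  rfl

structure Factorization (f : x ⟶ y) where
  k : ℕ
  q : x ⟶ ⟨k⟩
  i : (⟨k⟩ : UCat) ⟶ y
  surjective_q : Surjective q
  injective_i : Injective i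
  fac : q ≫ i = f

lemma Factorization.fac_apply {f : x ⟶ y} (φ : Factorization f) (a : Fin (x.len + 1)) :
    φ.i (φ.q a) = f a :=
  congrFun φ.fac a

lemma Factorization.nonempty (f : x ⟶ y) : Nonempty (Factorization f) := by
  obtain ⟨k, hk⟩ : ∃ k, Fintype.card (Set.range f) = k + 1 :=
    Nat.exists_eq_succ_of_ne_zero Fintype.card_ne_zero
  let e := Fintype.equivFinOfCardEq hk
  refine ⟨⟨k, fun a => e ⟨f a, a, rfl⟩, fun j => (e.symm j).1, fun j => ?_,
    fun j j' h => e.symm.injective (Subtype.ext h), funext fun a => by simp⟩⟩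
  obtain ⟨a, ha⟩ := (e.symm j).2
  exact ⟨a, by simp [ha]⟩

lemma exists_section {k : ℕ} {q : x ⟶ ⟨k⟩} (hq : Surjective q) (a : Fin (x.len + 1)) :
    ∃ s : (⟨k⟩ : UCat) ⟶ x, s ≫ q = 𝟙 _ ∧ s (q a) = a := by
  classical
  refine ⟨fun j => if j = q a then a else surjInv hq j, funext fun j => ?_, by simp⟩
  by_cases h : j = q a <;> simp [h, surjInv_eq hq]

lemma Factorization.exists_equiv {f : x ⟶ y} (φ ψ : Factorization f) :
    ∃ σ : Fin (φ.k + 1) ≃ Fin (ψ.k + 1), ⇑σ ∘ φ.q = ψ.q ∧ ψ.i ∘ σ = φ.i := by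
  obtain ⟨s, hs, -⟩ := exists_section φ.surjective_q 0
  have hq : ∀ a, ψ.q (s (φ.q a)) = ψ.q a := fun a => ψ.injective_i <| by
    rw [ψ.fac_apply, ψ.fac_apply, ← φ.fac_apply, ← φ.fac_apply, ← comp_apply s φ.q, hs, id_apply]
  have hi : ∀ j, ψ.i (ψ.q (s j)) = φ.i j := by
    intro j
    obtain ⟨a, rfl⟩ := φ.surjective_q j
    rw [hq, ψ.fac_apply, φ.fac_apply]
  have hσ : Bijective fun j => ψ.q (s j) := by
    refine ⟨fun j j' h => φ.injective_i ?_, fun j => ?_⟩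
    · rw [← hi, ← hi j']
      exact congrArg ψ.i h
    · obtain ⟨a, rfl⟩ := ψ.surjective_q j
      exact ⟨φ.q a, hq a⟩
  exact ⟨Equiv.ofBijective _ hσ, funext hq, funext hi⟩

lemma bijective_of_surjective {q : x ⟶ y} (hq : Surjective q) (h : x.len = y.len) :
    Bijective q :=
  (Fintype.bijective_iff_surjective_and_card q).2 ⟨hq, by simp [h]⟩

lemma bijective_of_injective {i : x ⟶ y} (hi : Injective i) (h : x.len = y.len) :
    Bijective i :=
  (Fintype.bijective_iff_injective_and_card i).2 ⟨hi, by simp [h]⟩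

def Factorization.ofSurjective {k : ℕ} {q : x ⟶ ⟨k⟩} (hq : Surjective q) : Factorization q :=
  ⟨k, q, 𝟙 _, hq, injective_id, rfl⟩

def Factorization.ofInjective {i : x ⟶ y} (hi : Injective i) : Factorization i :=
  ⟨x.len, 𝟙 x, i, surjective_id, hi, rfl⟩

lemma Factorization.k_eq_of_injective {f : x ⟶ y} (φ : Factorization f) (hf : Injective f) :
    φ.k = x.len := by
  have hq : Injective φ.q := fun a b h => hf (by rw [← φ.fac_apply, ← φ.fac_apply, h])
  have h₁ : x.len + 1 ≤ φ.k + 1 := Fin.le_of_injective _ hq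
  have h₂ : φ.k + 1 ≤ x.len + 1 := Fin.le_of_surjective _ φ.surjective_q
  omega

end UCat

open UCat

section Degeneracy

variable {F : UCatᵒᵖ ⥤ Type} {x : UCat}

lemma isDegenerate_map_of_len_lt {z : UCat} (g : x ⟶ z) (hz : z.len < x.len)
    (δ : F.obj (op z)) : IsDegenerate F x (F.map g.op δ) := by
  obtain ⟨p, hp⟩ : ∃ p, x.len = p + 1 := ⟨x.len - 1, by omega⟩
  let j : z ⟶ ⟨p⟩ := Fin.castLE (n := z.len + 1) (m := p + 1) (by omega)
  have hj : Injective j := Fin.castLE_injective _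
  let r : (⟨p⟩ : UCat) ⟶ z := invFun j
  refine ⟨⟨p⟩, hp, g ≫ j, F.map r.op δ, ?_⟩
  have hgjr : (g ≫ j) ≫ r = g := funext fun a => leftInverse_invFun hj (g a)
  rw [← map_comp_op_apply, hgjr]

lemma IsDegenerate.exists_surjective {γ : F.obj (op x)} (h : IsDegenerate F x γ) :
    ∃ (k : ℕ) (q : x ⟶ ⟨k⟩) (δ : F.obj (op ⟨k⟩)),
      Surjective q ∧ k < x.len ∧ γ = F.map q.op δ := by
  obtain ⟨m, hm, g, δ, rfl⟩ := h
  obtain ⟨φ⟩ := Factorization.nonempty g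
  refine ⟨φ.k, φ.q, F.map φ.i.op δ, φ.surjective_q, ?_, by rw [← map_comp_op_apply, φ.fac]⟩
  have : φ.k + 1 ≤ m.len + 1 := Fin.le_of_injective _ φ.injective_i
  omega

lemma injective_of_not_isDegenerate {y : UCat} {δ : F.obj (op x)} (hδ : ¬ IsDegenerate F x δ)
    (h : x ⟶ y) {δ' : F.obj (op y)} (hδδ' : δ = F.map h.op δ') : Injective h := by
  obtain ⟨φ⟩ := Factorization.nonempty h
  have hk : φ.k = x.len := by
    have : φ.k + 1 ≤ x.len + 1 := Fin.le_of_surjective _ φ.surjective_q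
    by_contra hne
    apply hδ
    rw [hδδ', ← φ.fac, map_comp_op_apply]
    exact isDegenerate_map_of_len_lt φ.q (show φ.k < x.len by omega) _
  rw [← φ.fac]
  exact φ.injective_i.comp (bijective_of_surjective φ.surjective_q hk.symm).1

end Degeneracy

structure EZDecomposition (F : UCatᵒᵖ ⥤ Type) {x : UCat} (γ : F.obj (op x)) where
  k : ℕ
  q : x ⟶ ⟨k⟩
  δ : F.obj (op ⟨k⟩)
  surjective_q : Surjective q
  nondegenerate : ¬ IsDegenerate F ⟨k⟩ δ
  eq_map : γ = F.map q.op δ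

namespace EZDecomposition

variable {F : UCatᵒᵖ ⥤ Type} {x : UCat}

def ofNondegenerate {γ : F.obj (op x)} (hγ : ¬ IsDegenerate F x γ) : EZDecomposition F γ :=
  ⟨x.len, 𝟙 x, γ, surjective_id, hγ, by simp⟩

lemma nonempty (γ : F.obj (op x)) : Nonempty (EZDecomposition F γ) := by
  induction hx : x.len using Nat.strong_induction_on generalizing x with
  | _ n ih =>
    by_cases hγ : IsDegenerate F x γ
    · obtain ⟨k, q, δ, hq, hk, rfl⟩ := hγ.exists_surjective
      obtain ⟨d⟩ := ih k (hx ▸ hk) δ rfl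
      exact ⟨⟨d.k, q ≫ d.q, d.δ, d.surjective_q.comp hq, d.nondegenerate,
        by rw [map_comp_op_apply]; exact congrArg _ d.eq_map⟩⟩
    · exact ⟨ofNondegenerate hγ⟩

variable {γ : F.obj (op x)} (d e : EZDecomposition F γ)

lemma δ_eq_map_of_section {s : (⟨d.k⟩ : UCat) ⟶ x} (hs : s ≫ d.q = 𝟙 _) :
    d.δ = F.map (s ≫ e.q).op e.δ := by
  calc d.δ = F.map (s ≫ d.q).op d.δ := by rw [hs, op_id, Functor.map_id_apply]
    _ = F.map s.op γ := by rw [map_comp_op_apply, ← d.eq_map]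
    _ = F.map (s ≫ e.q).op e.δ := by rw [map_comp_op_apply, ← e.eq_map]

lemma injective_of_section {s : (⟨d.k⟩ : UCat) ⟶ x} (hs : s ≫ d.q = 𝟙 _) :
    Injective (s ≫ e.q) :=
  injective_of_not_isDegenerate d.nondegenerate _ (d.δ_eq_map_of_section e hs)

lemma k_le : d.k ≤ e.k := by
  obtain ⟨s, hs, -⟩ := exists_section d.surjective_q 0
  have : d.k + 1 ≤ e.k + 1 := Fin.le_of_injective _ (d.injective_of_section e hs)
  omega

lemma bijective_of_section {s : (⟨d.k⟩ : UCat) ⟶ x} (hs : s ≫ d.q = 𝟙 _) :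
    Bijective (s ≫ e.q) :=
  bijective_of_injective (d.injective_of_section e hs) (le_antisymm (d.k_le e) (e.k_le d))

/-- Moving a section of `d.q` at a single point keeps `s ≫ e.q` injective, which forces
`e.q` to be constant on the fibres of `d.q`. -/
lemma apply_eq_of_apply_eq {a b : Fin (x.len + 1)} (hab : d.q a = d.q b) : e.q a = e.q b := by
  classical
  obtain ⟨s, hs, hsa⟩ := exists_section d.surjective_q a
  let s' : (⟨d.k⟩ : UCat) ⟶ x := update s (d.q a) b
  have hs' : s' ≫ d.q = 𝟙 _ := by
    funext j
    by_cases hj : j = d.q a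
    · simp [s', hj, hab]
    · simpa [s', hj] using congrFun hs j
  have := apply_eq_of_forall_ne (d.bijective_of_section e hs).2 (d.injective_of_section e hs')
    (y := d.q a) fun j hj => by simp [s', hj]
  simpa [s', hsa] using this

lemma exists_bijective :
    ∃ σ : (⟨d.k⟩ : UCat) ⟶ ⟨e.k⟩, Bijective σ ∧ d.q ≫ σ = e.q ∧ d.δ = F.map σ.op e.δ := by
  obtain ⟨s, hs, -⟩ := exists_section d.surjective_q 0
  refine ⟨s ≫ e.q, d.bijective_of_section e hs, funext fun a => ?_,
    d.δ_eq_map_of_section e hs⟩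
  exact d.apply_eq_of_apply_eq e (congrFun hs (d.q a))

def pullback (hF : IsNondegenerateSSet F) {w : UCat} (h : w ⟶ x) (φ : Factorization (h ≫ d.q)) :
    EZDecomposition F (F.map h.op γ) where
  k := φ.k
  q := φ.q
  δ := F.map φ.i.op d.δ
  surjective_q := φ.surjective_q
  nondegenerate := hF _ _ φ.i φ.injective_i d.δ d.nondegenerate
  eq_map := by
    rw [← map_comp_op_apply, φ.fac, map_comp_op_apply]
    exact congrArg _ d.eq_map

end EZDecomposition

def UDCat.incl : UDCat ⥤ UCat where
  obj y := ⟨y.len⟩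
  map f := f.1

namespace NDSSet

def nondegenerateSubfunctor (S : NDSSet) : Subfunctor (UDCat.incl.op ⋙ S.F) where
  obj y := {γ | ¬ IsDegenerate S.F (UDCat.incl.obj y.unop) γ}
  map {_ z} α γ hγ := S.nd (UDCat.incl.obj z.unop) _ (UDCat.incl.map α.unop) α.unop.2 γ hγ

def nondegenerateSimplices : NDSSet ⥤ (UDCatᵒᵖ ⥤ Type) where
  obj S := S.nondegenerateSubfunctor.toFunctor
  map f := Subfunctor.lift (Subfunctor.ι _ ≫ Functor.whiskerLeft _ f.1)
    (by rintro y _ ⟨γ, rfl⟩; exact f.2 (UDCat.incl.obj y.unop) γ.1 γ.2)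

instance : nondegenerateSimplices.Faithful where
  map_injective {S T f g} h := by
    refine Subtype.ext (NatTrans.ext (funext fun x => ConcreteCategory.hom_ext _ _ fun γ => ?_))
    obtain ⟨⟨k, q, δ, -, hδ, rfl⟩⟩ := EZDecomposition.nonempty γ
    have hfg : f.1.app _ δ = g.1.app _ δ :=
      congrArg Subtype.val (types_congr_hom (NatTrans.congr_app h (op ⟨k⟩)) ⟨δ, hδ⟩)
    rw [NatTrans.naturality_apply, NatTrans.naturality_apply, hfg]

section Full

variable {S T : NDSSet} (f : nondegenerateSimplices.obj S ⟶ nondegenerateSimplices.obj T)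

def appND {k : ℕ} (δ : S.F.obj (op ⟨k⟩)) (hδ : ¬ IsDegenerate S.F ⟨k⟩ δ) :
    T.F.obj (op ⟨k⟩) :=
  (f.app (op ⟨k⟩) ⟨δ, hδ⟩).1

lemma appND_eq_map {k l : ℕ} {σ : (⟨k⟩ : UCat) ⟶ ⟨l⟩} (hσ : Injective σ)
    {δ : S.F.obj (op ⟨k⟩)} {δ' : S.F.obj (op ⟨l⟩)} (hδ : ¬ IsDegenerate S.F ⟨k⟩ δ)
    (hδ' : ¬ IsDegenerate S.F ⟨l⟩ δ') (h : δ = S.F.map σ.op δ') :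
    appND f δ hδ = T.F.map σ.op (appND f δ' hδ') := by
  subst h
  exact Subfunctor.nat_trans_naturality _ f (Quiver.Hom.op (⟨σ, hσ⟩ : (⟨k⟩ : UDCat) ⟶ ⟨l⟩))
    (⟨δ', hδ'⟩ : (nondegenerateSimplices.obj S).obj (op ⟨l⟩))

def extensionValue {x : UCat} {γ : S.F.obj (op x)} (d : EZDecomposition S.F γ) :
    T.F.obj (op x) :=
  T.F.map d.q.op (appND f d.δ d.nondegenerate)

lemma extensionValue_eq {x : UCat} {γ : S.F.obj (op x)} (d e : EZDecomposition S.F γ) :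
    extensionValue f d = extensionValue f e := by
  obtain ⟨σ, hσ, hqσ, hδ⟩ := d.exists_bijective e
  rw [extensionValue, appND_eq_map f hσ.1 d.nondegenerate e.nondegenerate hδ,
    ← map_comp_op_apply, hqσ, extensionValue]

lemma extensionValue_pullback {x w : UCat} {γ : S.F.obj (op x)} (d : EZDecomposition S.F γ)
    (h : w ⟶ x) (φ : Factorization (h ≫ d.q)) :
    extensionValue f (d.pullback S.nd h φ) = T.F.map h.op (extensionValue f d) := by
  change T.F.map φ.q.op (appND f _ (S.nd _ _ φ.i φ.injective_i d.δ d.nondegenerate)) = _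
  rw [appND_eq_map f φ.injective_i _ d.nondegenerate rfl,
    ← map_comp_op_apply, φ.fac, map_comp_op_apply, extensionValue]

lemma extensionValue_ofNondegenerate {x : UCat} {γ : S.F.obj (op x)}
    (hγ : ¬ IsDegenerate S.F x γ) :
    extensionValue f (EZDecomposition.ofNondegenerate hγ) = appND f γ hγ :=
  Functor.map_id_apply _ _ _

noncomputable def extension : S.F ⟶ T.F where
  app _ := ↾fun γ => extensionValue f (EZDecomposition.nonempty γ).some
  naturality _ _ h := ConcreteCategory.hom_ext _ _ fun _ =>
    (extensionValue_eq f _ (EZDecomposition.pullback _ S.nd h.unop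
      (Factorization.nonempty _).some)).trans (extensionValue_pullback f _ h.unop _)

lemma extension_app_of_nondegenerate {x : UCat} {γ : S.F.obj (op x)}
    (hγ : ¬ IsDegenerate S.F x γ) :
    (extension f).app (op x) γ = appND f γ hγ :=
  (extensionValue_eq f _ _).trans (extensionValue_ofNondegenerate f hγ)

lemma preservesND_extension : PreservesND (extension f) := fun x γ hγ => by
  rw [extension_app_of_nondegenerate f hγ]
  exact (f.app (op ⟨x.len⟩) ⟨γ, hγ⟩).2

end Full

instance : nondegenerateSimplices.Full where
  map_surjective f := ⟨⟨extension f, preservesND_extension f⟩, NatTrans.ext (funext fun _ =>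
    ConcreteCategory.hom_ext _ _ fun γ => Subtype.ext (extension_app_of_nondegenerate f γ.2))⟩

end NDSSet

def UDCat.homOfInjective {a b : ℕ} {f : Fin (a + 1) → Fin (b + 1)} (hf : Function.Injective f) :
    (⟨a⟩ : UDCat) ⟶ ⟨b⟩ :=
  ⟨f, hf⟩

namespace WithDegeneracies

open UDCat

variable (X : UDCatᵒᵖ ⥤ Type) {x y : UCat}

structure Rep (x : UCat) where
  k : ℕ
  q : x ⟶ ⟨k⟩
  surjective_q : Surjective q
  a : X.obj (op ⟨k⟩)

instance Rep.setoid (x : UCat) : Setoid (Rep X x) where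
  r r s := ∃ σ : Fin (r.k + 1) ≃ Fin (s.k + 1),
    ⇑σ ∘ r.q = s.q ∧ r.a = X.map (homOfInjective σ.injective).op s.a
  iseqv := by
    refine ⟨fun r => ⟨Equiv.refl _, rfl, (Functor.map_id_apply X _ r.a).symm⟩, ?_, ?_⟩
    · rintro r s ⟨σ, hq, ha⟩
      refine ⟨σ.symm, by rw [← hq, ← comp_assoc, Equiv.symm_comp_self, id_comp], ?_⟩
      rw [ha, ← map_comp_op_apply]
      exact (Functor.map_id_apply X _ s.a).symm.trans
        (congrArg (fun g => X.map (Quiver.Hom.op g) s.a) (Subtype.ext σ.self_comp_symm.symm))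
    · rintro r s t ⟨σ, hq, ha⟩ ⟨τ, hq', ha'⟩
      refine ⟨σ.trans τ, by rw [← hq', ← hq]; rfl, ?_⟩
      rw [ha, ha', ← map_comp_op_apply]
      rfl

lemma Rep.k_eq_of_equiv {r s : Rep X x} (h : r ≈ s) : r.k = s.k := by
  obtain ⟨σ, -⟩ := h
  simpa using Fin.equiv_iff_eq.1 ⟨σ⟩

def Rep.mkId {n : ℕ} (a : X.obj (op ⟨n⟩)) : Rep X ⟨n⟩ :=
  ⟨n, 𝟙 _, surjective_id, a⟩

def Obj (x : UCat) : Type :=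
  Quotient (Rep.setoid X x)

variable {X}

def _root_.UCat.Factorization.rep {m : ℕ} {f : x ⟶ ⟨m⟩} (φ : Factorization f)
    (a : X.obj (op ⟨m⟩)) : Rep X x :=
  ⟨φ.k, φ.q, φ.surjective_q, X.map (homOfInjective φ.injective_i).op a⟩

lemma _root_.UCat.Factorization.rep_equiv {m : ℕ} {f : x ⟶ ⟨m⟩} (φ ψ : Factorization f)
    (a : X.obj (op ⟨m⟩)) : φ.rep a ≈ ψ.rep a := by
  obtain ⟨σ, hq, hi⟩ := φ.exists_equiv ψ
  have hi' : homOfInjective φ.injective_i =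
      homOfInjective σ.injective ≫ homOfInjective ψ.injective_i :=
    Subtype.ext hi.symm
  exact ⟨σ, hq, (congrArg (fun g => X.map (Quiver.Hom.op g) a) hi').trans
    (map_comp_op_apply X _ _ a)⟩

variable (X) in
noncomputable def mk {m : ℕ} (f : x ⟶ ⟨m⟩) (a : X.obj (op ⟨m⟩)) : Obj X x :=
  ⟦(Factorization.nonempty f).some.rep a⟧

lemma mk_eq {m : ℕ} {f : x ⟶ ⟨m⟩} (φ : Factorization f) (a : X.obj (op ⟨m⟩)) :
    mk X f a = ⟦φ.rep a⟧ :=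
  Quotient.sound (Factorization.rep_equiv _ _ _)

lemma mk_of_surjective (r : Rep X x) : mk X r.q r.a = ⟦r⟧ := by
  obtain ⟨k, q, hq, a⟩ := r
  rw [mk_eq (Factorization.ofSurjective hq)]
  exact congrArg _ (congrArg (Rep.mk _ _ _) (Functor.map_id_apply X _ a))

lemma mk_comp_injective {m p : ℕ} (f : x ⟶ ⟨m⟩) {i : (⟨m⟩ : UCat) ⟶ ⟨p⟩} (hi : Injective i)
    (a : X.obj (op ⟨p⟩)) : mk X (f ≫ i) a = mk X f (X.map (homOfInjective hi).op a) := by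
  obtain ⟨φ⟩ := Factorization.nonempty f
  let ψ : Factorization (f ≫ i) :=
    ⟨φ.k, φ.q, φ.i ≫ i, φ.surjective_q, hi.comp φ.injective_i, by rw [← Category.assoc, φ.fac]⟩
  rw [mk_eq ψ, mk_eq φ]
  exact congrArg _ (congrArg (Rep.mk _ _ _)
    (map_comp_op_apply X (homOfInjective φ.injective_i) (homOfInjective hi) a))

variable (X) in
noncomputable def map (h : x ⟶ y) : Obj X y → Obj X x :=
  Quotient.lift (fun r => mk X (h ≫ r.q) r.a) <| by
    rintro r s ⟨σ, hq, ha⟩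
    calc mk X (h ≫ r.q) r.a = mk X (h ≫ r.q) (X.map (homOfInjective σ.injective).op s.a) := by
          rw [ha]
      _ = mk X (h ≫ s.q) s.a := by
          rw [← mk_comp_injective, ← hq]
          rfl

lemma map_quotient_mk (h : x ⟶ y) (r : Rep X y) : map X h ⟦r⟧ = mk X (h ≫ r.q) r.a :=
  rfl

lemma map_mk (h : x ⟶ y) {m : ℕ} (f : y ⟶ ⟨m⟩) (a : X.obj (op ⟨m⟩)) :
    map X h (mk X f a) = mk X (h ≫ f) a := by
  obtain ⟨φ⟩ := Factorization.nonempty f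
  rw [mk_eq φ, map_quotient_mk]
  change mk X (h ≫ φ.q) (X.map (homOfInjective φ.injective_i).op a) = _
  rw [← mk_comp_injective, Category.assoc, φ.fac]

end WithDegeneracies

open WithDegeneracies in
noncomputable def withDegeneracies (X : UDCatᵒᵖ ⥤ Type) : UCatᵒᵖ ⥤ Type where
  obj x := Obj X x.unop
  map h := ↾map X h.unop
  map_id x := ConcreteCategory.hom_ext _ _ fun e => by
    induction e using Quotient.ind with
    | _ r =>
      change map X (𝟙 _) ⟦r⟧ = ⟦r⟧
      rw [← mk_of_surjective r, map_mk, Category.id_comp]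
  map_comp h h' := ConcreteCategory.hom_ext _ _ fun e => by
    induction e using Quotient.ind with
    | _ r =>
      change map X (h'.unop ≫ h.unop) ⟦r⟧ = map X h'.unop (map X h.unop ⟦r⟧)
      rw [← mk_of_surjective r, map_mk, map_mk, map_mk, Category.assoc]

namespace WithDegeneracies

variable {X : UDCatᵒᵖ ⥤ Type} {x : UCat}

lemma quotient_mk_eq_map (r : Rep X x) :
    (⟦r⟧ : Obj X x) = (withDegeneracies X).map r.q.op ⟦Rep.mkId X r.a⟧ :=
  (mk_of_surjective r).symm

lemma isDegenerate_iff (r : Rep X x) :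
    IsDegenerate (withDegeneracies X) x ⟦r⟧ ↔ r.k < x.len := by
  refine ⟨?_, fun h => by rw [quotient_mk_eq_map]; exact isDegenerate_map_of_len_lt r.q h _⟩
  rintro ⟨m, hm, c, e, he⟩
  induction e using Quotient.ind with
  | _ s =>
    obtain ⟨φ⟩ := Factorization.nonempty (c ≫ s.q)
    have hk : φ.k = r.k := Rep.k_eq_of_equiv X (Quotient.exact ((mk_eq φ s.a).symm.trans he))
    have h₁ : φ.k + 1 ≤ s.k + 1 := Fin.le_of_injective _ φ.injective_i
    have h₂ : s.k + 1 ≤ m.len + 1 := Fin.le_of_surjective _ s.surjective_q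
    omega

lemma not_isDegenerate_iff (r : Rep X x) :
    ¬ IsDegenerate (withDegeneracies X) x ⟦r⟧ ↔ r.k = x.len := by
  have : r.k + 1 ≤ x.len + 1 := Fin.le_of_surjective _ r.surjective_q
  rw [isDegenerate_iff]
  omega

lemma isNondegenerateSSet : IsNondegenerateSSet (withDegeneracies X) := by
  intro a b α hα γ hγ
  induction γ using Quotient.ind with
  | _ r =>
    have hq := bijective_of_surjective r.surjective_q ((not_isDegenerate_iff r).1 hγ).symm
    obtain ⟨φ⟩ := Factorization.nonempty (α ≫ r.q)
    change ¬ IsDegenerate (withDegeneracies X) a (mk X (α ≫ r.q) r.a)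
    rw [mk_eq φ, not_isDegenerate_iff]
    exact φ.k_eq_of_injective (hq.1.comp hα)

end WithDegeneracies

noncomputable def withDegeneraciesND (X : UDCatᵒᵖ ⥤ Type) : NDSSet :=
  ⟨withDegeneracies X, WithDegeneracies.isNondegenerateSSet⟩

namespace WithDegeneracies

variable (X : UDCatᵒᵖ ⥤ Type)

def toNondegenerate (y : UDCat) (a : X.obj (op y)) :
    (NDSSet.nondegenerateSimplices.obj (withDegeneraciesND X)).obj (op y) :=
  ⟨⟦Rep.mkId X (n := y.len) a⟧, (not_isDegenerate_iff _).2 rfl⟩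

lemma bijective_toNondegenerate (y : UDCat) : Bijective (toNondegenerate X y) := by
  refine ⟨fun a a' h => ?_, fun ⟨γ, hγ⟩ => ?_⟩
  · obtain ⟨σ, hσ, ha⟩ := Quotient.exact (congrArg Subtype.val h)
    obtain rfl : σ = Equiv.refl _ := Equiv.ext (congrFun hσ)
    exact ha.trans (Functor.map_id_apply X _ a')
  · induction γ using Quotient.ind with
    | _ r =>
      obtain ⟨k, q, hq, a⟩ := r
      obtain rfl : k = y.len := (not_isDegenerate_iff _).1 hγ
      have hqb := bijective_of_surjective hq rfl
      exact ⟨X.map (UDCat.homOfInjective hqb.1).op a,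
        Subtype.ext (Quotient.sound ⟨Equiv.ofBijective q hqb, rfl, rfl⟩)⟩

lemma toNondegenerate_map {y z : UDCat} (α : y ⟶ z) (a : X.obj (op z)) :
    toNondegenerate X y (X.map α.op a) =
      (NDSSet.nondegenerateSimplices.obj (withDegeneraciesND X)).map α.op (toNondegenerate X z a) :=
  Subtype.ext (mk_eq (Factorization.ofInjective α.2) a).symm

noncomputable def isoNondegenerateSimplices :
    X ≅ NDSSet.nondegenerateSimplices.obj (withDegeneraciesND X) :=
  NatIso.ofComponents (fun y => (Equiv.ofBijective _ (bijective_toNondegenerate X y.unop)).toIso)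
    fun α => ConcreteCategory.hom_ext _ _ (toNondegenerate_map X α.unop)

end WithDegeneracies

instance : NDSSet.nondegenerateSimplices.EssSurj where
  mem_essImage X := ⟨withDegeneraciesND X, ⟨(WithDegeneracies.isoNondegenerateSimplices X).symm⟩⟩

instance : NDSSet.nondegenerateSimplices.IsEquivalence where

/-- the category of presheaves on the injective subcategory is
equivalent to the category of nondegenerate unoriented simplicial sets with
nondegenerate morphisms. -/
theorem stmt14 : Nonempty ((UDCatᵒᵖ ⥤ Type) ≌ NDSSet) :=
  ⟨NDSSet.nondegenerateSimplices.asEquivalence.symm⟩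
end
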